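/- arXiv:2401.17265 — 7 statements merged into one kernel-verified Lean document; each statement's English description precedes it below -/
import Mathlib

section
/- Let (Ω,𝓕,ℙ) be a probability space, 𝓖 ⊆ 𝓕 a sub-σ-algebra such that (Ω,𝓖,ℙ) is atomless, and ≿ a total preorder on a 𝓖-law-invariant set 𝒳 of bounded random variables that is monotone (Y ≤ X a.s. implies X ≿ Y). Then ≿ is 𝓖-FSD monotone (X ≿ Y whenever X,Y are 𝓖-measurable and Y dominates X in first-order stochastic dominance) if and only if ≿ is 𝓖-law invariant (X ∼ Y whenever X,Y are 𝓖-measurable and identically distributed under ℙ). -/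
/-!
Equal laws dominate each other, so FSD monotonicity gives law invariance. Conversely, since
`(Ω, 𝓖, ℙ)` is atomless, Sierpiński's theorem lets one split `Ω` into `𝓖`-measurable dyadic cells
of exact measures `2⁻ⁿ`, and reading off the cell addresses yields a `𝓖`-measurable `U` uniform on
`(0, 1)`. If `Y` dominates `X`, the quantile transforms `q_X(U) ≤ q_Y(U)` are pointwise ordered
`𝓖`-measurable copies of `X` and `Y`, so `X ∼ q_X(U) ≾ q_Y(U) ∼ Y` by law invariance and
monotonicity.
-/

open MeasureTheory Set Filter Topology
open scoped ENNReal

namespace ProbabilityTheory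

variable {Ω : Type*} {mΩ : MeasurableSpace Ω} {U V : Ω → ℝ} {P : Measure Ω}

def IsStdUniform (U : Ω → ℝ) (P : Measure Ω) : Prop :=
  ∀ t ∈ Icc (0 : ℝ) 1, P {ω | U ω ≤ t} = ENNReal.ofReal t

namespace IsStdUniform

theorem congr (hU : IsStdUniform U P) (h : U =ᵐ[P] V) : IsStdUniform V P := fun t ht => by
  rw [← hU t ht]
  exact measure_congr (h.fun_comp (· ≤ t)).symm

theorem measure_one_le [IsProbabilityMeasure P] (hU : IsStdUniform U P) (hUm : Measurable U) :
    P {ω | 1 ≤ U ω} = 0 := by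
  have hsmall (ε : ℝ) (hε : ε ∈ Ioo 0 1) : P {ω | 1 ≤ U ω} ≤ ENNReal.ofReal ε := calc
    P {ω | 1 ≤ U ω} ≤ P {ω | U ω ≤ 1 - ε}ᶜ :=
      measure_mono fun ω hω => by simp only [mem_compl_iff, mem_ofPred_eq] at hω ⊢; linarith [hε.1]
    _ = ENNReal.ofReal ε := by
      rw [prob_compl_eq_one_sub (measurableSet_le hUm measurable_const), ← ENNReal.ofReal_one,
        hU _ ⟨by linarith [hε.2], by linarith [hε.1]⟩, ← ENNReal.ofReal_sub _ (by linarith [hε.2])]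
      ring_nf
  have hlim : Tendsto ENNReal.ofReal (𝓝[>] 0) (𝓝 0) := by
    simpa using (ENNReal.continuous_ofReal.tendsto 0).mono_left nhdsWithin_le_nhds
  exact nonpos_iff_eq_zero.1 <|
    ge_of_tendsto hlim (eventually_of_mem (Ioo_mem_nhdsGT one_pos) hsmall)

theorem ae_mem_Ioo [IsProbabilityMeasure P] (hU : IsStdUniform U P) (hUm : Measurable U) :
    ∀ᵐ ω ∂P, U ω ∈ Ioo 0 1 := by
  have hzero : P {ω | U ω ≤ 0} = 0 := by rw [hU 0 ⟨le_rfl, zero_le_one⟩, ENNReal.ofReal_zero]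
  refine measure_mono_null (fun ω hω => ?_) (measure_union_null hzero (hU.measure_one_le hUm))
  simp only [mem_compl_iff, mem_ofPred_eq, mem_union, mem_Ioo, not_and_or, not_lt] at hω ⊢
  exact hω

theorem exists_mem_Ioo [IsProbabilityMeasure P] (hU : IsStdUniform U P) (hUm : Measurable U) :
    ∃ V : Ω → ℝ, Measurable V ∧ (∀ ω, V ω ∈ Ioo 0 1) ∧ IsStdUniform V P := by
  classical
  let N := {ω | U ω ∉ Ioo 0 1}
  have hae : U =ᵐ[P] N.piecewise (fun _ => 1 / 2) U :=
    (hU.ae_mem_Ioo hUm).mono fun ω hω => (piecewise_eq_of_notMem _ _ _ (not_not.2 hω)).symm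
  refine ⟨N.piecewise (fun _ => 1 / 2) U,
    Measurable.piecewise (hUm measurableSet_Ioo).compl measurable_const hUm, fun ω => ?_,
    hU.congr hae⟩
  by_cases hω : ω ∈ N
  · rw [piecewise_eq_of_mem _ _ _ hω]
    norm_num
  · rw [piecewise_eq_of_notMem _ _ _ hω]
    simpa [N] using hω

end IsStdUniform

/-- Meaningful for `u ∈ (0, 1)`; for other `u` the set may be empty or unbounded below, and `sInf`
returns a junk value. -/
noncomputable def quantile (μ : Measure ℝ) (u : ℝ) : ℝ := sInf {x | u ≤ cdf μ x}

variable {μ ν : Measure ℝ} {u : ℝ}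

theorem quantile_le_iff (hu : u ∈ Ioo 0 1) {x : ℝ} : quantile μ u ≤ x ↔ u ≤ cdf μ x := by
  have hne : {x | u ≤ cdf μ x}.Nonempty :=
    ((tendsto_cdf_atTop μ).eventually (lt_mem_nhds hu.2)).exists.imp fun _ => le_of_lt
  have hbdd : BddBelow {x | u ≤ cdf μ x} := by
    obtain ⟨a, ha⟩ := eventually_atBot.1 ((tendsto_cdf_atBot μ).eventually (gt_mem_nhds hu.1))
    exact ⟨a, fun x hx => le_of_not_ge fun hxa => (ha x hxa).not_ge hx⟩
  refine ⟨fun h => le_trans ?_ (monotone_cdf μ h), fun h => csInf_le hbdd h⟩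
  -- right-continuity of the cdf puts the infimum into the set
  rw [← (cdf μ).iInf_Ioi_eq]
  refine le_ciInf fun y => ?_
  obtain ⟨z, hz, hzy⟩ := exists_lt_of_csInf_lt hne y.2
  exact hz.trans (monotone_cdf μ hzy.le)

theorem quantile_le_quantile (h : ∀ x, cdf ν x ≤ cdf μ x) (hu : u ∈ Ioo 0 1) :
    quantile μ u ≤ quantile ν u :=
  (quantile_le_iff hu).2 <| ((quantile_le_iff hu).1 le_rfl).trans (h _)

theorem quantile_mem_Icc [IsProbabilityMeasure μ] {a b : ℝ} (h : ∀ᵐ x ∂μ, x ∈ Icc a b)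
    (hu : u ∈ Ioo 0 1) : quantile μ u ∈ Icc a b := by
  have hout : μ (Icc a b)ᶜ = 0 := ae_iff.1 h
  refine ⟨le_of_not_gt fun hlt => ?_, (quantile_le_iff hu).2 ?_⟩
  · have hsub : Iic (quantile μ u) ⊆ (Icc a b)ᶜ := fun x hx hx' => (hx.trans_lt hlt).not_ge hx'.1
    have h0 : μ (Iic (quantile μ u)) = 0 := measure_mono_null hsub hout
    rw [← ofReal_cdf, ENNReal.ofReal_eq_zero] at h0
    linarith [hu.1, (quantile_le_iff (μ := μ) hu).1 le_rfl]
  · have hb : μ (Iic b) = 1 := (prob_compl_eq_zero_iff measurableSet_Iic).1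
      (measure_mono_null (compl_subset_compl.2 Icc_subset_Iic_self) hout)
    have hcdf : cdf μ b = 1 := ENNReal.ofReal_eq_one.1 (by rw [ofReal_cdf, hb])
    exact hcdf ▸ hu.2.le

theorem abs_quantile_map_le [IsProbabilityMeasure P] {X : Ω → ℝ} (hX : Measurable X) {C : ℝ}
    (hC : ∀ ω, |X ω| ≤ C) (hu : u ∈ Ioo 0 1) : |quantile (P.map X) u| ≤ C := by
  have := Measure.isProbabilityMeasure_map (μ := P) hX.aemeasurable
  exact abs_le.2 <| quantile_mem_Icc ((ae_map_iff hX.aemeasurable measurableSet_Icc).2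
    (ae_of_all _ fun ω => abs_le.1 (hC ω))) hu

theorem quantile_map_le_quantile_map [IsProbabilityMeasure P] {X Y : Ω → ℝ} (hX : Measurable X)
    (hY : Measurable Y) (h : ∀ x, P {ω | Y ω ≤ x} ≤ P {ω | X ω ≤ x}) (hu : u ∈ Ioo 0 1) :
    quantile (P.map X) u ≤ quantile (P.map Y) u := by
  have := Measure.isProbabilityMeasure_map (μ := P) hX.aemeasurable
  have := Measure.isProbabilityMeasure_map (μ := P) hY.aemeasurable
  refine quantile_le_quantile (fun x => ?_) hu
  rw [← ENNReal.ofReal_le_ofReal_iff (cdf_nonneg _ x), ofReal_cdf, ofReal_cdf,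
    Measure.map_apply hX measurableSet_Iic, Measure.map_apply hY measurableSet_Iic]
  exact h x

theorem preimage_quantile_comp_Iic (μ : Measure ℝ) (hU01 : ∀ ω, U ω ∈ Ioo 0 1) (x : ℝ) :
    (fun ω => quantile μ (U ω)) ⁻¹' Iic x = {ω | U ω ≤ cdf μ x} :=
  ext fun ω => quantile_le_iff (hU01 ω)

theorem measurable_quantile_comp (μ : Measure ℝ) (hU : Measurable U)
    (hU01 : ∀ ω, U ω ∈ Ioo 0 1) : Measurable fun ω => quantile μ (U ω) :=
  measurable_of_Iic fun x =>
    preimage_quantile_comp_Iic μ hU01 x ▸ measurableSet_le hU measurable_const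

theorem map_quantile_comp [IsProbabilityMeasure μ] (hU : Measurable U)
    (hU01 : ∀ ω, U ω ∈ Ioo 0 1) (hUu : IsStdUniform U P) :
    P.map (fun ω => quantile μ (U ω)) = μ := by
  refine (Measure.ext_of_Iic μ _ fun x => ?_).symm
  rw [Measure.map_apply (measurable_quantile_comp μ hU hU01) measurableSet_Iic,
    preimage_quantile_comp_Iic μ hU01, hUu _ ⟨cdf_nonneg μ x, cdf_le_one μ x⟩, ofReal_cdf]

end ProbabilityTheory

open ProbabilityTheory (IsStdUniform IdentDistrib quantile measurable_quantile_comp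
  map_quantile_comp abs_quantile_map_le quantile_map_le_quantile_map)

theorem tendsto_nat_floor_mul_two_pow_add_one_div {t : ℝ} (ht : 0 ≤ t) :
    Tendsto (fun n : ℕ => (⌊t * 2 ^ n⌋₊ + 1 : ℝ) / 2 ^ n) atTop (𝓝 t) := by
  have hinv : Tendsto (fun n : ℕ => t + ((2 : ℝ) ^ n)⁻¹) atTop (𝓝 t) := by
    simpa using (tendsto_const_nhds (x := t)).add
      (tendsto_inv_atTop_zero.comp (tendsto_pow_atTop_atTop_of_one_lt (one_lt_two (α := ℝ))))
  refine tendsto_of_tendsto_of_tendsto_of_le_of_le tendsto_const_nhds hinv (fun n => ?_)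
    (fun n => ?_)
  · rw [le_div_iff₀ (by positivity)]
    exact (Nat.lt_floor_add_one _).le
  · rw [add_div, one_div]
    gcongr
    rw [div_le_iff₀ (by positivity)]
    exact Nat.floor_le (by positivity)

namespace MeasureTheory

variable {Ω : Type*} {mΩ : MeasurableSpace Ω} {μ : Measure Ω} {A : Set Ω}

theorem measure_setOf_lt_eq_mul {f : Ω → ℕ} (hf : Measurable f) {N : ℕ} {c : ℝ≥0∞}
    (hc : ∀ k < N, μ {ω | f ω = k} = c) {j : ℕ} (hj : j ≤ N) : μ {ω | f ω < j} = j * c := by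
  induction j with
  | zero => simp
  | succ j ih =>
    have hsplit : {ω | f ω < j + 1} = {ω | f ω < j} ∪ {ω | f ω = j} := by
      ext ω
      simp only [mem_ofPred_eq, mem_union]
      omega
    have hdisj : Disjoint {ω | f ω < j} {ω | f ω = j} :=
      disjoint_left.2 fun ω (h1 : f ω < j) h2 => h1.ne h2
    rw [hsplit, measure_union hdisj (hf (measurableSet_singleton j)), ih (by omega),
      hc j (by omega), Nat.cast_succ, add_one_mul]

theorem measure_div_two_pow_le {f : Ω → ℕ} (hf : Measurable f) {n : ℕ}
    (hcell : ∀ k < 2 ^ n, μ {ω | f ω = k} = 2⁻¹ ^ n) {t : ℝ} (ht0 : 0 ≤ t) (ht1 : t < 1) :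
    μ {ω | (f ω : ℝ) / 2 ^ n ≤ t} = ENNReal.ofReal ((⌊t * 2 ^ n⌋₊ + 1) / 2 ^ n) := by
  have hpow : (0 : ℝ) < 2 ^ n := by positivity
  have htn : 0 ≤ t * 2 ^ n := mul_nonneg ht0 hpow.le
  have hset : {ω | (f ω : ℝ) / 2 ^ n ≤ t} = {ω | f ω < ⌊t * 2 ^ n⌋₊ + 1} := by
    ext ω
    simp only [mem_ofPred_eq, div_le_iff₀ hpow, Nat.lt_add_one_iff, Nat.le_floor_iff htn]
  have hfloor : ⌊t * 2 ^ n⌋₊ + 1 ≤ 2 ^ n := (Nat.floor_lt htn).2 (by push_cast; nlinarith)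
  rw [hset, measure_setOf_lt_eq_mul hf hcell hfloor, div_eq_mul_inv,
    ENNReal.ofReal_mul (by positivity), ← inv_pow, ENNReal.ofReal_pow (by norm_num),
    ENNReal.ofReal_inv_of_pos two_pos, ENNReal.ofReal_ofNat]
  norm_cast

theorem isStdUniform_iSup_div_two_pow [IsProbabilityMeasure μ] {K : ℕ → Ω → ℕ}
    (hK : ∀ n, Measurable (K n)) (hlt : ∀ n ω, K n ω < 2 ^ n)
    (hmono : ∀ n ω, 2 * K n ω ≤ K (n + 1) ω)
    (hcell : ∀ n k, k < 2 ^ n → μ {ω | K n ω = k} = 2⁻¹ ^ n) :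
    IsStdUniform (fun ω => ⨆ n, (K n ω : ℝ) / 2 ^ n) μ := by
  let V : ℕ → Ω → ℝ := fun n ω => K n ω / 2 ^ n
  have hVmeas (n : ℕ) : Measurable (V n) := (measurable_from_nat.comp (hK n)).div_const _
  have hV1 (n : ℕ) (ω : Ω) : V n ω < 1 :=
    (div_lt_one (by positivity)).2 (by exact_mod_cast hlt n ω)
  have hVmono (ω : Ω) : Monotone (V · ω) := monotone_nat_of_le_succ fun n => by
    rw [div_le_div_iff₀ (by positivity) (by positivity), pow_succ]
    have : (2 * K n ω : ℝ) ≤ K (n + 1) ω := by exact_mod_cast hmono n ω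
    nlinarith [pow_pos (two_pos (α := ℝ)) n]
  have hbdd (ω : Ω) : BddAbove (range (V · ω)) := ⟨1, forall_mem_range.2 fun n => (hV1 n ω).le⟩
  intro t ht
  show μ {ω | ⨆ n, V n ω ≤ t} = _
  rcases ht.2.eq_or_lt with rfl | ht1
  · have huniv : {ω | ⨆ n, V n ω ≤ 1} = univ :=
      eq_univ_of_forall fun ω => ciSup_le fun n => (hV1 n ω).le
    rw [huniv, measure_univ, ENNReal.ofReal_one]
  have hiInter : {ω | ⨆ n, V n ω ≤ t} = ⋂ n, {ω | V n ω ≤ t} := by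
    ext ω
    simp [ciSup_le_iff (hbdd ω)]
  rw [hiInter]
  refine tendsto_nhds_unique (tendsto_measure_iInter_atTop
    (fun n => (measurableSet_le (hVmeas n) measurable_const).nullMeasurableSet)
    (fun m n hmn ω hω => (hVmono ω hmn).trans hω) ⟨0, measure_ne_top μ _⟩) ?_
  have hVt (n : ℕ) : μ {ω | V n ω ≤ t} = ENNReal.ofReal ((⌊t * 2 ^ n⌋₊ + 1) / 2 ^ n) :=
    measure_div_two_pow_le (hK n) (hcell n) ht.1 ht1
  simp_rw [Function.comp_def, hVt]
  exact (ENNReal.continuous_ofReal.tendsto t).comp (tendsto_nat_floor_mul_two_pow_add_one_div ht.1)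

open Classical in
noncomputable def refineDigits (H : Set Ω → Set Ω) (f : Ω → ℕ) (ω : Ω) : ℕ :=
  2 * f ω + if ω ∈ H {ω' | f ω' = f ω} then 0 else 1

section refineDigits

variable {H : Set Ω → Set Ω} (hHE : ∀ E, H E ⊆ E)
include hHE

theorem setOf_refineDigits_eq (f : Ω → ℕ) (k : ℕ) :
    {ω | refineDigits H f ω = 2 * k} = H {ω | f ω = k} ∧
      {ω | refineDigits H f ω = 2 * k + 1} = {ω | f ω = k} \ H {ω | f ω = k} := by
  constructor <;> ext ω <;> simp only [mem_ofPred_eq, Set.mem_sdiff, refineDigits] <;>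
    rcases eq_or_ne (f ω) k with rfl | hk
  · split_ifs with h <;> simp [h]
  · have : ω ∉ H {ω' | f ω' = k} := fun h => hk (hHE _ h)
    split_ifs <;> simp only [this, iff_false] <;> omega
  · split_ifs with h <;> simp [h]
  · split_ifs <;> simp only [hk, false_and, iff_false] <;> omega

theorem refineDigits_cells [IsFiniteMeasure μ]
    (hH : ∀ E, MeasurableSet E → MeasurableSet (H E) ∧ μ (H E) = μ E / 2) {f : Ω → ℕ} {n : ℕ} (hf : ∀ k, MeasurableSet {ω | f ω = k})
    (hfμ : ∀ k < 2 ^ n, μ {ω | f ω = k} = 2⁻¹ ^ n) :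
    (∀ j, MeasurableSet {ω | refineDigits H f ω = j}) ∧
      ∀ j < 2 ^ (n + 1), μ {ω | refineDigits H f ω = j} = 2⁻¹ ^ (n + 1) := by
  have hsplit (j : ℕ) : MeasurableSet {ω | refineDigits H f ω = j} ∧
      (j < 2 ^ (n + 1) → μ {ω | refineDigits H f ω = j} = 2⁻¹ ^ (n + 1)) := by
    obtain ⟨k, rfl | rfl⟩ := j.even_or_odd' <;> obtain ⟨hHmeas, hHμ⟩ := hH _ (hf k)
    · refine (setOf_refineDigits_eq hHE f k).1 ▸ ⟨hHmeas, fun hk => ?_⟩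
      rw [hHμ, hfμ k (by rw [pow_succ] at hk; omega), pow_succ, div_eq_mul_inv]
    · refine (setOf_refineDigits_eq hHE f k).2 ▸ ⟨(hf k).diff hHmeas, fun hk => ?_⟩
      rw [measure_sdiff (hHE _) hHmeas.nullMeasurableSet (measure_ne_top μ _), hHμ,
        ENNReal.sub_half (measure_ne_top μ _), hfμ k (by rw [pow_succ] at hk; omega), pow_succ,
        div_eq_mul_inv]
  exact ⟨fun j => (hsplit j).1, fun j hj => (hsplit j).2 hj⟩

end refineDigits

theorem exists_dyadic_digits_of_halving [IsProbabilityMeasure μ] {H : Set Ω → Set Ω}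
    (hHE : ∀ E, H E ⊆ E) (hH : ∀ E, MeasurableSet E → MeasurableSet (H E) ∧ μ (H E) = μ E / 2) :
    ∃ K : ℕ → Ω → ℕ, (∀ n, Measurable (K n)) ∧ (∀ n ω, K n ω < 2 ^ n) ∧
      (∀ n ω, 2 * K n ω ≤ K (n + 1) ω) ∧ ∀ n k, k < 2 ^ n → μ {ω | K n ω = k} = 2⁻¹ ^ n := by
  -- `K n ω` is the binary address of the level-`n` cell containing `ω`
  let K : ℕ → Ω → ℕ := fun n => (refineDigits H)^[n] fun _ => 0
  have hKsucc (n : ℕ) : K (n + 1) = refineDigits H (K n) := Function.iterate_succ_apply' _ _ _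
  have hlevel (n : ℕ) : (∀ k, MeasurableSet {ω | K n ω = k}) ∧
      ∀ k < 2 ^ n, μ {ω | K n ω = k} = 2⁻¹ ^ n := by
    induction n with
    | zero =>
      refine ⟨fun k => .const (0 = k), fun k hk => ?_⟩
      simp [K, show k = 0 by omega]
    | succ n ih => exact hKsucc n ▸ refineDigits_cells hHE hH ih.1 ih.2
  refine ⟨K, fun n => measurable_to_countable' (hlevel n).1, fun n ω => ?_,
    fun n ω => by rw [hKsucc, refineDigits]; omega, fun n => (hlevel n).2⟩
  induction n with
  | zero => simp [K]
  | succ n ih => rw [hKsucc, refineDigits, pow_succ]; split_ifs <;> omega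

namespace Measure

theorem exists_subset_two_mul_measure_ge [IsFiniteMeasure μ] (E : Set Ω) (r : ℝ≥0∞) :
    ∃ C ⊆ E, MeasurableSet C ∧ μ C ≤ r ∧
      ∀ D ⊆ E, MeasurableSet D → μ D ≤ r → μ D ≤ 2 * μ C := by
  set S := {x | ∃ D ⊆ E, MeasurableSet D ∧ μ D ≤ r ∧ μ D = x}
  have hS : ∀ D ⊆ E, MeasurableSet D → μ D ≤ r → μ D ≤ sSup S :=
    fun D hDE hD hDr => le_sSup ⟨D, hDE, hD, hDr, rfl⟩
  rcases eq_or_ne (sSup S) 0 with h0 | h0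
  · refine ⟨∅, empty_subset E, .empty, by simp, fun D hDE hD hDr => ?_⟩
    simpa [h0] using hS D hDE hD hDr
  have hfin : sSup S ≠ ∞ := ne_top_of_le_ne_top (measure_ne_top μ univ) <|
    sSup_le fun _ ⟨D, _, _, _, hDx⟩ => hDx ▸ measure_mono (subset_univ D)
  obtain ⟨_, ⟨C, hCE, hC, hCr, rfl⟩, hlt⟩ := lt_sSup_iff.1 (ENNReal.half_lt_self h0 hfin)
  refine ⟨C, hCE, hC, hCr, fun D hDE hD hDr => (hS D hDE hD hDr).trans ?_⟩
  rw [← ENNReal.add_halves (sSup S), two_mul]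
  exact add_le_add hlt.le hlt.le

theorem exists_subset_measure_le_maximal [IsFiniteMeasure μ] (A : Set Ω) (t : ℝ≥0∞) :
    ∃ B ⊆ A, MeasurableSet B ∧ μ B ≤ t ∧
      ∀ D ⊆ A \ B, MeasurableSet D → μ D ≤ t - μ B → μ D = 0 := by
  choose C hCE hC hCr hCmax using fun E r => exists_subset_two_mul_measure_ge (μ := μ) E r
  -- greedy exhaustion: enlarge `B n` by a set of at least half the largest admissible measure
  let B : ℕ → Set Ω := fun n => n.rec ∅ fun _ B => B ∪ C (A \ B) (t - μ B)
  let c : ℕ → Set Ω := fun n => C (A \ B n) (t - μ (B n))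
  have hBsucc (n : ℕ) : B (n + 1) = B n ∪ c n := rfl
  have hμB (n : ℕ) : μ (B (n + 1)) = μ (B n) + μ (c n) :=
    measure_union (disjoint_sdiff_right.mono_right (hCE _ _)) (hC _ _)
  have hB (n : ℕ) : MeasurableSet (B n) ∧ B n ⊆ A ∧ μ (B n) ≤ t := by
    induction n with
    | zero => exact ⟨.empty, empty_subset A, by simp [B]⟩
    | succ n ih =>
      refine ⟨hBsucc n ▸ ih.1.union (hC _ _),
        hBsucc n ▸ union_subset ih.2.1 ((hCE _ _).trans sdiff_subset), ?_⟩
      rw [hμB]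
      calc μ (B n) + μ (c n) ≤ μ (B n) + (t - μ (B n)) := add_le_add le_rfl (hCr _ _)
        _ = t := add_tsub_cancel_of_le ih.2.2
  have hsum (n : ℕ) : ∑ k ∈ Finset.range n, μ (c k) = μ (B n) := by
    induction n with
    | zero => simp [B]
    | succ n ih => rw [Finset.sum_range_succ, ih, hμB]
  have hc : Tendsto (fun n => 2 * μ (c n)) atTop (𝓝 0) := by
    simpa using ENNReal.Tendsto.const_mul (ENNReal.tendsto_atTop_zero_of_tsum_ne_top <|
      ne_top_of_le_ne_top (measure_ne_top μ univ) <| ENNReal.tsum_le_of_sum_range_le fun n =>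
        (hsum n).trans_le (measure_mono (subset_univ _))) (.inr ENNReal.ofNat_ne_top)
  have hmono : Monotone B := monotone_nat_of_le_succ fun n => subset_union_left
  refine ⟨⋃ n, B n, iUnion_subset fun n => (hB n).2.1, .iUnion fun n => (hB n).1, ?_,
    fun D hDA hD hDt => ?_⟩
  · rw [hmono.measure_iUnion]
    exact iSup_le fun n => (hB n).2.2
  -- `D` was admissible at every step
  have hDc (n : ℕ) : μ D ≤ 2 * μ (c n) :=
    hCmax _ _ D (hDA.trans (sdiff_subset_sdiff_right (subset_iUnion B n))) hD
      (hDt.trans (tsub_le_tsub_left (measure_mono (subset_iUnion B n)) t))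
  exact nonpos_iff_eq_zero.1 (ge_of_tendsto' hc hDc)

def IsAtomless (μ : Measure Ω) : Prop :=
  ∀ A, MeasurableSet A → 0 < μ A → ∃ B, MeasurableSet B ∧ B ⊆ A ∧ 0 < μ B ∧ μ B < μ A

namespace IsAtomless

variable [IsFiniteMeasure μ] (hμ : μ.IsAtomless)
include hμ

theorem exists_subset_pos_le_half (hA : MeasurableSet A) (hA0 : 0 < μ A) :
    ∃ B ⊆ A, MeasurableSet B ∧ 0 < μ B ∧ μ B ≤ μ A / 2 := by
  obtain ⟨B, hB, hBA, hB0, hBA'⟩ := hμ A hA hA0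
  rcases le_total (μ B) (μ A / 2) with h | h
  · exact ⟨B, hBA, hB, hB0, h⟩
  have hdiff : μ (A \ B) = μ A - μ B := measure_sdiff hBA hB.nullMeasurableSet (measure_ne_top μ B)
  refine ⟨A \ B, sdiff_subset, hA.diff hB, hdiff ▸ tsub_pos_of_lt hBA', ?_⟩
  calc μ (A \ B) = μ A - μ B := hdiff
    _ ≤ μ A - μ A / 2 := tsub_le_tsub_left h _
    _ = μ A / 2 := ENNReal.sub_half (measure_ne_top μ A)

theorem exists_subset_pos_le (hA : MeasurableSet A) (hA0 : 0 < μ A) {ε : ℝ≥0∞} (hε : 0 < ε) :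
    ∃ B ⊆ A, MeasurableSet B ∧ 0 < μ B ∧ μ B ≤ ε := by
  have hiter : ∀ n : ℕ, ∃ B ⊆ A, MeasurableSet B ∧ 0 < μ B ∧ μ B ≤ μ A * 2⁻¹ ^ n := by
    intro n
    induction n with
    | zero => exact ⟨A, subset_rfl, hA, hA0, by simp⟩
    | succ n ih =>
      obtain ⟨B, hBA, hB, hB0, hBn⟩ := ih
      obtain ⟨C, hCB, hC, hC0, hCB'⟩ := hμ.exists_subset_pos_le_half hB hB0
      refine ⟨C, hCB.trans hBA, hC, hC0, hCB'.trans ?_⟩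
      rw [pow_succ, ← mul_assoc, ← div_eq_mul_inv]
      gcongr
  have hlim : Tendsto (fun n : ℕ => μ A * 2⁻¹ ^ n) atTop (𝓝 0) := by
    simpa using ENNReal.Tendsto.const_mul
      (ENNReal.tendsto_pow_atTop_nhds_zero_of_lt_one (by norm_num)) (.inr (measure_ne_top μ A))
  obtain ⟨n, hn⟩ := (hlim.eventually (gt_mem_nhds hε)).exists
  obtain ⟨B, hBA, hB, hB0, hBn⟩ := hiter n
  exact ⟨B, hBA, hB, hB0, hBn.trans hn.le⟩

/-- Sierpiński's theorem. -/
theorem exists_subset_measure_eq (hA : MeasurableSet A) {t : ℝ≥0∞} (ht : t ≤ μ A) :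
    ∃ B ⊆ A, MeasurableSet B ∧ μ B = t := by
  obtain ⟨B, hBA, hB, hBt, hmax⟩ := exists_subset_measure_le_maximal (μ := μ) A t
  refine ⟨B, hBA, hB, le_antisymm hBt (not_lt.1 fun hlt => ?_)⟩
  obtain ⟨D, hDA, hD, hD0, hDt⟩ := hμ.exists_subset_pos_le (hA.diff hB)
    ((tsub_pos_of_lt (hlt.trans_le ht)).trans_le le_measure_sdiff) (tsub_pos_of_lt hlt)
  exact hD0.ne' (hmax D hDA hD hDt)

theorem exists_halving : ∃ H : Set Ω → Set Ω, (∀ E, H E ⊆ E) ∧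
    ∀ E, MeasurableSet E → MeasurableSet (H E) ∧ μ (H E) = μ E / 2 := by
  have halves (E : Set Ω) : ∃ H ⊆ E, MeasurableSet E → MeasurableSet H ∧ μ H = μ E / 2 := by
    by_cases hE : MeasurableSet E
    · obtain ⟨H, hHE, hH⟩ := hμ.exists_subset_measure_eq hE ENNReal.half_le_self
      exact ⟨H, hHE, fun _ => hH⟩
    · exact ⟨∅, empty_subset E, fun h => (hE h).elim⟩
  choose H hHE hH using halves
  exact ⟨H, hHE, hH⟩

end IsAtomless

theorem IsAtomless.exists_isStdUniform [IsProbabilityMeasure μ] (hμ : μ.IsAtomless) :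
    ∃ U : Ω → ℝ, Measurable U ∧ (∀ ω, U ω ∈ Ioo 0 1) ∧ IsStdUniform U μ := by
  obtain ⟨H, hHE, hH⟩ := hμ.exists_halving
  obtain ⟨K, hK, hlt, hmono, hcell⟩ := exists_dyadic_digits_of_halving hHE hH
  exact (isStdUniform_iSup_div_two_pow hK hlt hmono hcell).exists_mem_Ioo <|
    .iSup fun n => (measurable_from_nat.comp (hK n)).div_const _

theorem isAtomless_trim {m : MeasurableSpace Ω} (hm : m ≤ mΩ)
    (h : ∀ A, MeasurableSet[m] A → 0 < μ A →
      ∃ B, MeasurableSet[m] B ∧ B ⊆ A ∧ 0 < μ B ∧ μ B < μ A) :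
    (μ.trim hm).IsAtomless := fun A hA hA0 => by
  rw [trim_measurableSet_eq hm hA] at hA0 ⊢
  obtain ⟨B, hB, hBA, hB0, hBA'⟩ := h A hA hA0
  exact ⟨B, hB, hBA, by rwa [trim_measurableSet_eq hm hB], by rwa [trim_measurableSet_eq hm hB]⟩

theorem IsAtomless.exists_isStdUniform_of_trim {m : MeasurableSpace Ω} (hm : m ≤ mΩ)
    [IsProbabilityMeasure μ] (hμ : (μ.trim hm).IsAtomless) :
    ∃ U : Ω → ℝ, Measurable[m] U ∧ (∀ ω, U ω ∈ Ioo 0 1) ∧ IsStdUniform U μ := by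
  have : IsProbabilityMeasure (μ.trim hm) :=
    ⟨by rw [trim_measurableSet_eq hm .univ, measure_univ]⟩
  obtain ⟨U, hU, hU01, hUu⟩ := hμ.exists_isStdUniform
  exact ⟨U, hU, hU01, fun t ht => by
    rw [← trim_measurableSet_eq hm (measurableSet_le hU measurable_const), hUu t ht]⟩

end Measure

end MeasureTheory

theorem stmt_1_general {Ω : Type*} (m : MeasurableSpace Ω) {mΩ : MeasurableSpace Ω} (hm : m ≤ mΩ)
    (ℙ : Measure Ω) [IsProbabilityMeasure ℙ]
    (hatomless : ∀ A : Set Ω, MeasurableSet[m] A → 0 < ℙ A →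
      ∃ B : Set Ω, MeasurableSet[m] B ∧ B ⊆ A ∧ 0 < ℙ B ∧ ℙ B < ℙ A)
    (𝒳 : Set (Ω → ℝ)) (R : (Ω → ℝ) → (Ω → ℝ) → Prop)
    (h𝒳 : ∀ X ∈ 𝒳, Measurable X ∧ ∃ C : ℝ, ∀ ω, |X ω| ≤ C)
    (h𝒳law : ∀ X ∈ 𝒳, ∀ Y : Ω → ℝ, Measurable[m] X → Measurable[m] Y →
      (∃ C : ℝ, ∀ ω, |Y ω| ≤ C) → Measure.map X ℙ = Measure.map Y ℙ → Y ∈ 𝒳)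
    (htrans : ∀ X ∈ 𝒳, ∀ Y ∈ 𝒳, ∀ Z ∈ 𝒳, R X Y → R Y Z → R X Z)
    (hmono : ∀ X ∈ 𝒳, ∀ Y ∈ 𝒳, (∀ᵐ ω ∂ℙ, X ω ≤ Y ω) → R X Y) :
    (∀ X ∈ 𝒳, ∀ Y ∈ 𝒳, Measurable[m] X → Measurable[m] Y →
        (∀ x : ℝ, ℙ {ω | Y ω ≤ x} ≤ ℙ {ω | X ω ≤ x}) → R X Y)
      ↔ (∀ X ∈ 𝒳, ∀ Y ∈ 𝒳, Measurable[m] X → Measurable[m] Y →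
        Measure.map X ℙ = Measure.map Y ℙ → (R X Y ∧ R Y X)) := by
  have hmeas {X : Ω → ℝ} (hX : Measurable[m] X) : Measurable X := hX.mono hm le_rfl
  constructor
  · intro hFSD X hX Y hY hXm hYm hXY
    have hcdf (x : ℝ) : ℙ {ω | X ω ≤ x} = ℙ {ω | Y ω ≤ x} :=
      (IdentDistrib.mk (hmeas hXm).aemeasurable (hmeas hYm).aemeasurable hXY).measure_mem_eq
        measurableSet_Iic
    exact ⟨hFSD X hX Y hY hXm hYm fun x => (hcdf x).ge, hFSD Y hY X hX hYm hXm fun x => (hcdf x).le⟩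
  · intro hlaw X hX Y hY hXm hYm hFSD
    obtain ⟨U, hUm, hU01, hUu⟩ :=
      (Measure.isAtomless_trim hm hatomless).exists_isStdUniform_of_trim hm
    have transform (Z : Ω → ℝ) (hZ : Z ∈ 𝒳) (hZm : Measurable[m] Z) :
        (fun ω => quantile (ℙ.map Z) (U ω)) ∈ 𝒳 ∧
          R Z (fun ω => quantile (ℙ.map Z) (U ω)) ∧ R (fun ω => quantile (ℙ.map Z) (U ω)) Z := by
      have := Measure.isProbabilityMeasure_map (μ := ℙ) (hmeas hZm).aemeasurable
      have hZ'm := measurable_quantile_comp (ℙ.map Z) hUm hU01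
      have hmap := (map_quantile_comp (μ := ℙ.map Z) (hmeas hUm) hU01 hUu).symm
      obtain ⟨C, hC⟩ := (h𝒳 Z hZ).2
      have hZ' := h𝒳law Z hZ _ hZm hZ'm
        ⟨C, fun ω => abs_quantile_map_le (hmeas hZm) hC (hU01 ω)⟩ hmap
      exact ⟨hZ', hlaw Z hZ _ hZ' hZm hZ'm hmap⟩
    obtain ⟨hX', hXX', -⟩ := transform X hX hXm
    obtain ⟨hY', -, hY'Y⟩ := transform Y hY hYm
    have hX'Y' := hmono _ hX' _ hY' <| ae_of_all _ fun ω =>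
      quantile_map_le_quantile_map (hmeas hXm) (hmeas hYm) hFSD (hU01 ω)
    exact htrans _ hX _ hX' _ hY hXX' (htrans _ hX' _ hY' _ hY hX'Y' hY'Y)

/-- for a monotone total preorder on a 𝓖-law-invariant set of bounded random
variables, with (Ω,𝓖,ℙ) atomless, 𝓖-FSD monotonicity is equivalent to 𝓖-law invariance. -/
theorem stmt_1 {Ω : Type*} (m : MeasurableSpace Ω) {mΩ : MeasurableSpace Ω} (hm : m ≤ mΩ)
    (ℙ : Measure Ω) [IsProbabilityMeasure ℙ]
    (hatomless : ∀ A : Set Ω, MeasurableSet[m] A → 0 < ℙ A →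
      ∃ B : Set Ω, MeasurableSet[m] B ∧ B ⊆ A ∧ 0 < ℙ B ∧ ℙ B < ℙ A)
    (𝒳 : Set (Ω → ℝ)) (R : (Ω → ℝ) → (Ω → ℝ) → Prop)
    (h𝒳 : ∀ X ∈ 𝒳, Measurable X ∧ ∃ C : ℝ, ∀ ω, |X ω| ≤ C)
    (h𝒳law : ∀ X ∈ 𝒳, ∀ Y : Ω → ℝ, Measurable[m] X → Measurable[m] Y →
      (∃ C : ℝ, ∀ ω, |Y ω| ≤ C) → Measure.map X ℙ = Measure.map Y ℙ → Y ∈ 𝒳)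
    (hrefl : ∀ X ∈ 𝒳, R X X)
    (htrans : ∀ X ∈ 𝒳, ∀ Y ∈ 𝒳, ∀ Z ∈ 𝒳, R X Y → R Y Z → R X Z)
    (htotal : ∀ X ∈ 𝒳, ∀ Y ∈ 𝒳, R X Y ∨ R Y X)
    (hmono : ∀ X ∈ 𝒳, ∀ Y ∈ 𝒳, (∀ᵐ ω ∂ℙ, X ω ≤ Y ω) → R X Y) :
    (∀ X ∈ 𝒳, ∀ Y ∈ 𝒳, Measurable[m] X → Measurable[m] Y →
        (∀ x : ℝ, ℙ {ω | Y ω ≤ x} ≤ ℙ {ω | X ω ≤ x}) → R X Y)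
      ↔ (∀ X ∈ 𝒳, ∀ Y ∈ 𝒳, Measurable[m] X → Measurable[m] Y →
        Measure.map X ℙ = Measure.map Y ℙ → (R X Y ∧ R Y X)) :=
  stmt_1_general m hm ℙ hatomless 𝒳 R h𝒳 h𝒳law htrans hmono
end

section
/- Let ρ: L^∞ → ℝ be cash invariant and monotone. Then ρ is Fatou continuous (ρ(X) ≤ liminf ρ(X_n) whenever (X_n) is uniformly bounded and converges ℙ-a.s. to X) if and only if ρ is continuous from below, i.e., for every increasing sequence (X_n) in L^∞ converging a.s. to X ∈ L^∞ one has ρ(X_n) ↑ ρ(X). -/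
open MeasureTheory Filter

/-- for a cash-invariant monotone functional on L^∞, Fatou continuity is
equivalent to continuity from below. -/
theorem stmt_4 {Ω : Type*} {mΩ : MeasurableSpace Ω} (ℙ : Measure Ω) [IsProbabilityMeasure ℙ]
    (ρ : (Ω → ℝ) → ℝ)
    (hcash : ∀ (X : Ω → ℝ) (c : ℝ), Measurable X → (∃ C : ℝ, ∀ ω, |X ω| ≤ C) →
      ρ (fun ω => X ω + c) = ρ X + c)
    (hmono : ∀ X Y : Ω → ℝ, Measurable X → (∃ C : ℝ, ∀ ω, |X ω| ≤ C) → Measurable Y →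
      (∃ C : ℝ, ∀ ω, |Y ω| ≤ C) → (∀ᵐ ω ∂ℙ, X ω ≤ Y ω) → ρ X ≤ ρ Y) :
    (∀ (Xs : ℕ → Ω → ℝ) (X : Ω → ℝ) (C : ℝ), (∀ n, Measurable (Xs n)) →
        (∀ n ω, |Xs n ω| ≤ C) → Measurable X → (∀ ω, |X ω| ≤ C) →
        (∀ᵐ ω ∂ℙ, Tendsto (fun n => Xs n ω) atTop (nhds (X ω))) →
        ρ X ≤ liminf (fun n => ρ (Xs n)) atTop)
      ↔ (∀ (Xs : ℕ → Ω → ℝ) (X : Ω → ℝ) (C : ℝ), (∀ n, Measurable (Xs n)) →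
        (∀ n ω, |Xs n ω| ≤ C) → (∀ n ω, Xs n ω ≤ Xs (n + 1) ω) → Measurable X →
        (∀ ω, |X ω| ≤ C) →
        (∀ᵐ ω ∂ℙ, Tendsto (fun n => Xs n ω) atTop (nhds (X ω))) →
        Tendsto (fun n => ρ (Xs n)) atTop (nhds (ρ X))) := by
  constructor
  · -- Fatou ⇒ continuity from below
    intro hFatou Xs X C hXm hXb hincr hXM hXCb hconv
    -- ρ (Xs n) is monotone and bounded above by ρ X
    have hle : ∀ n, ρ (Xs n) ≤ ρ X := by
      intro n
      refine hmono _ _ (hXm n) ⟨C, hXb n⟩ hXM ⟨C, hXCb⟩ ?_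
      filter_upwards [hconv] with ω hω
      have hmonω : Monotone fun m => Xs m ω := monotone_nat_of_le_succ fun m => hincr m ω
      refine ge_of_tendsto hω ?_
      filter_upwards [eventually_ge_atTop n] with m hm
      exact hmonω hm
    have hmonoseq : Monotone fun n => ρ (Xs n) := by
      refine monotone_nat_of_le_succ fun n => ?_
      exact hmono _ _ (hXm n) ⟨C, hXb n⟩ (hXm (n+1)) ⟨C, hXb (n+1)⟩
        (Eventually.of_forall (hincr n))
    have hbdd : BddAbove (Set.range fun n => ρ (Xs n)) :=
      ⟨ρ X, by rintro _ ⟨n, rfl⟩; exact hle n⟩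
    have htend : Tendsto (fun n => ρ (Xs n)) atTop (nhds (⨆ n, ρ (Xs n))) :=
      tendsto_atTop_ciSup hmonoseq hbdd
    have h1 : ρ X ≤ ⨆ n, ρ (Xs n) := by
      have := hFatou Xs X C hXm hXb hXM hXCb hconv
      rwa [htend.liminf_eq] at this
    have h2 : (⨆ n, ρ (Xs n)) ≤ ρ X := ciSup_le hle
    rwa [le_antisymm h2 h1] at htend
  · -- continuity from below ⇒ Fatou
    intro hcb Xs X C hXm hXb hXM hXCb hconv
    set Y : ℕ → Ω → ℝ := fun n ω => ⨅ k, Xs (n + k) ω with hY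
    have hYb : ∀ n ω, |Y n ω| ≤ C := by
      intro n ω
      have h1 : Y n ω ≤ Xs (n + 0) ω := ciInf_le ⟨-C, by
        rintro _ ⟨k, rfl⟩; exact neg_le_of_abs_le (hXb _ ω)⟩ 0
      have h2 : -C ≤ Y n ω := le_ciInf fun k => neg_le_of_abs_le (hXb _ ω)
      exact abs_le.2 ⟨h2, h1.trans (le_of_abs_le (hXb _ ω))⟩
    have hYm : ∀ n, Measurable (Y n) := fun n =>
      Measurable.iInf fun k => hXm (n + k)
    have hYincr : ∀ n ω, Y n ω ≤ Y (n + 1) ω := by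
      intro n ω
      refine le_ciInf fun k => ?_
      have : Y n ω ≤ Xs (n + (1 + k)) ω := ciInf_le ⟨-C, by
        rintro _ ⟨j, rfl⟩; exact neg_le_of_abs_le (hXb _ ω)⟩ (1 + k)
      rwa [show n + 1 + k = n + (1 + k) by ring]
    have hYconv : ∀ᵐ ω ∂ℙ, Tendsto (fun n => Y n ω) atTop (nhds (X ω)) := by
      filter_upwards [hconv] with ω hω
      rw [Metric.tendsto_atTop] at hω ⊢
      intro ε hε
      obtain ⟨N, hN⟩ := hω (ε / 2) (by linarith)
      refine ⟨N, fun n hn => ?_⟩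
      have hlb : X ω - ε / 2 ≤ Y n ω := by
        refine le_ciInf fun k => ?_
        have := hN (n + k) (le_trans hn (Nat.le_add_right n k))
        rw [Real.dist_eq, abs_lt] at this
        linarith [this.1]
      have hub : Y n ω ≤ Xs (n + 0) ω := ciInf_le ⟨-C, by
        rintro _ ⟨j, rfl⟩; exact neg_le_of_abs_le (hXb _ ω)⟩ 0
      rw [Nat.add_zero] at hub
      have := hN n hn
      rw [Real.dist_eq, abs_lt] at this
      rw [Real.dist_eq, abs_lt]
      constructor <;> [linarith [this.1]; linarith [this.2]]
    have hYtend : Tendsto (fun n => ρ (Y n)) atTop (nhds (ρ X)) :=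
      hcb Y X C hYm hYb hYincr hXM hXCb hYconv
    -- each ρ (Y n) ≤ liminf ρ (Xs k)
    have hbddXs : ∀ k, ρ (Xs k) ≤ ρ (fun _ => C) := by
      intro k
      exact hmono _ _ (hXm k) ⟨C, hXb k⟩ measurable_const
        ⟨|C|, fun ω => le_rfl⟩
        (Eventually.of_forall fun ω => le_of_abs_le (hXb k ω))
    have hcobdd : IsCoboundedUnder (· ≥ ·) atTop fun k => ρ (Xs k) :=
      IsBoundedUnder.isCoboundedUnder_ge ⟨ρ (fun _ => C),
        eventually_map.2 (Eventually.of_forall hbddXs)⟩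
    have hkey : ∀ n, ρ (Y n) ≤ liminf (fun k => ρ (Xs k)) atTop := by
      intro n
      refine le_liminf_of_le hcobdd ?_
      filter_upwards [eventually_ge_atTop n] with k hk
      refine hmono _ _ (hYm n) ⟨C, hYb n⟩ (hXm k) ⟨C, hXb k⟩
        (Eventually.of_forall fun ω => ?_)
      have : Y n ω ≤ Xs (n + (k - n)) ω := ciInf_le ⟨-C, by
        rintro _ ⟨j, rfl⟩; exact neg_le_of_abs_le (hXb _ ω)⟩ (k - n)
      rwa [Nat.add_sub_cancel' hk] at this
    exact le_of_tendsto hYtend (Eventually.of_forall hkey)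
end

section
/- Let ρ: L^∞ → ℝ be a Lebesgue-continuous coherent risk measure (i.e., ρ(X_n) → ρ(X) whenever X_n is uniformly bounded and converges a.s. to X), and let ρ̃ = ρ|_{L^∞(𝓖)}. Then the set of restrictions 𝒮_ρ^𝓖 = {μ|_𝓖 : μ ∈ 𝒮_ρ} equals the supporting set 𝒮_{ρ̃} of ρ̃. -/
open MeasureTheory

/-- Membership in the supporting set of ρ (densities of probability measures ≪ ℙ). -/
def SuppMem {Ω : Type*} {mΩ : MeasurableSpace Ω} (ℙ : Measure Ω) (ρ : (Ω → ℝ) → ℝ)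
    (D : Ω → ℝ) : Prop :=
  Measurable D ∧ (∀ᵐ ω ∂ℙ, 0 ≤ D ω) ∧ Integrable D ℙ ∧ (∫ ω, D ω ∂ℙ) = 1 ∧
    ∀ X : Ω → ℝ, Measurable X → (∃ C : ℝ, ∀ ω, |X ω| ≤ C) → (∫ ω, D ω * X ω ∂ℙ) ≤ ρ X

/-- Membership in the supporting set of ρ̃ = ρ|_{L^∞(𝓖)} (𝓖-measurable densities). -/
def SuppMemG {Ω : Type*} (m : MeasurableSpace Ω) {mΩ : MeasurableSpace Ω} (ℙ : Measure Ω)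
    (ρ : (Ω → ℝ) → ℝ) (E : Ω → ℝ) : Prop :=
  StronglyMeasurable[m] E ∧ (∀ᵐ ω ∂ℙ, 0 ≤ E ω) ∧ Integrable E ℙ ∧ (∫ ω, E ω ∂ℙ) = 1 ∧
    ∀ X : Ω → ℝ, StronglyMeasurable[m] X → (∃ C : ℝ, ∀ ω, |X ω| ≤ C) →
      (∫ ω, E ω * X ω ∂ℙ) ≤ ρ X

/-!
Conditional expectation maps 𝒮_ρ into 𝒮_ρ̃, since `𝔼[D X] = 𝔼[𝔼[D|𝓖] X]` for 𝓖-measurable `X`.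
Conversely, for `E ∈ 𝒮_ρ̃` extend `X ↦ 𝔼[E X]` from `L^∞(𝓖)` to all bounded measurable `X` by
Hahn–Banach, dominated by the sublinear functional ρ. Monotonicity of ρ makes the extension `g`
positive and the Lebesgue property makes it continuous along bounded pointwise convergent
sequences, so `A ↦ g(1_A)` is a finite measure `μ ≪ ℙ` with `∫ X dμ = g X`. Its density `D`
lies in 𝒮_ρ and has the same integrals as `E` over 𝓖-sets, i.e. `𝔼[D|𝓖] = E`.
-/

open Filter Topology

noncomputable section

variable {Ω : Type*}

def boundedMeasurable (mΩ : MeasurableSpace Ω) : Submodule ℝ (Ω → ℝ) where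
  carrier := {f | Measurable f ∧ ∃ C : ℝ, ∀ ω, |f ω| ≤ C}
  add_mem' := by
    rintro f g ⟨hf, Cf, hCf⟩ ⟨hg, Cg, hCg⟩
    exact ⟨hf.add hg, Cf + Cg, fun ω => (abs_add_le _ _).trans (add_le_add (hCf ω) (hCg ω))⟩
  zero_mem' := ⟨measurable_const, 0, fun _ => by simp⟩
  smul_mem' := by
    rintro c f ⟨hf, C, hC⟩
    refine ⟨hf.const_smul c, |c| * C, fun ω => ?_⟩
    simpa [abs_mul] using mul_le_mul_of_nonneg_left (hC ω) (abs_nonneg c)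

instance {mΩ : MeasurableSpace Ω} : CoeFun (boundedMeasurable mΩ) (fun _ => Ω → ℝ) :=
  ⟨fun v => (v : Ω → ℝ)⟩

theorem abs_indicator_one_le (A : Set Ω) (ω : Ω) : |A.indicator (1 : Ω → ℝ) ω| ≤ 1 := by
  simpa using norm_indicator_le_norm_self (1 : Ω → ℝ) ω

def bmIndicator {mΩ : MeasurableSpace Ω} {A : Set Ω} (hA : MeasurableSet A) :
    boundedMeasurable mΩ :=
  ⟨A.indicator 1, measurable_one.indicator hA, 1, abs_indicator_one_le A⟩

@[simp]
theorem coe_bmIndicator {mΩ : MeasurableSpace Ω} {A : Set Ω} (hA : MeasurableSet A) :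
    (bmIndicator hA : Ω → ℝ) = A.indicator 1 :=
  rfl

theorem MeasureTheory.SimpleFunc.mem_boundedMeasurable {mΩ : MeasurableSpace Ω}
    (s : SimpleFunc Ω ℝ) : ⇑s ∈ boundedMeasurable mΩ := by
  obtain ⟨C, hC⟩ := s.exists_forall_norm_le
  exact ⟨s.measurable, C, hC⟩

theorem MeasureTheory.Integrable.mul_boundedMeasurable {mΩ : MeasurableSpace Ω}
    {μ : Measure Ω} {E : Ω → ℝ} (hE : Integrable E μ) (v : boundedMeasurable mΩ) :
    Integrable (fun ω => E ω * v ω) μ := by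
  obtain ⟨hv, C, hC⟩ := v.2
  exact hE.mul_bdd hv.aestronglyMeasurable (ae_of_all _ hC)

def weightedIntegral {mΩ : MeasurableSpace Ω} {μ : Measure Ω} {E : Ω → ℝ} (hE : Integrable E μ) :
    boundedMeasurable mΩ →ₗ[ℝ] ℝ where
  toFun v := ∫ ω, E ω * v ω ∂μ
  map_add' v w := by
    simp only [Submodule.coe_add, Pi.add_apply, mul_add]
    exact integral_add (hE.mul_boundedMeasurable v) (hE.mul_boundedMeasurable w)
  map_smul' c v := by
    simp only [Submodule.coe_smul, Pi.smul_apply, smul_eq_mul, mul_left_comm _ c,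
      integral_const_mul, RingHom.id_apply]

/-- The Lebesgue property, asked only of everywhere convergent sequences. -/
def BoundedPointwiseContinuous {mΩ : MeasurableSpace Ω} (N : boundedMeasurable mΩ → ℝ) : Prop :=
  ∀ (v : ℕ → boundedMeasurable mΩ) (w : boundedMeasurable mΩ) (C : ℝ), (∀ n ω, |v n ω| ≤ C) →
    (∀ ω, |w ω| ≤ C) → (∀ ω, Tendsto (fun n => v n ω) atTop (𝓝 (w ω))) →
    Tendsto (fun n => N (v n)) atTop (𝓝 (N w))

theorem apply_add_le_of_convex_of_homogeneous {V : Type*} [AddCommGroup V] [Module ℝ V]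
    {N : V → ℝ}
    (hconv : ∀ x y : V, ∀ t : ℝ, 0 ≤ t → t ≤ 1 → N (t • x + (1 - t) • y) ≤ t * N x + (1 - t) * N y)
    (hhom : ∀ x : V, ∀ t : ℝ, 0 ≤ t → N (t • x) = t * N x) (x y : V) :
    N (x + y) ≤ N x + N y := by
  have hmid := hconv x y (1 / 2) (by norm_num) (by norm_num)
  have hxy : x + y = (2 : ℝ) • ((1 / 2 : ℝ) • x + (1 - 1 / 2 : ℝ) • y) := by
    rw [smul_add, smul_smul, smul_smul]
    norm_num
  rw [hxy, hhom _ 2 zero_le_two]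
  linarith

theorem BoundedPointwiseContinuous.of_le {mΩ : MeasurableSpace Ω} {N : boundedMeasurable mΩ → ℝ}
    (hN : BoundedPointwiseContinuous N) (hN0 : N 0 = 0) (g : boundedMeasurable mΩ →ₗ[ℝ] ℝ)
    (hg : ∀ v, g v ≤ N v) : BoundedPointwiseContinuous g := by
  intro v w C hv hw hlim
  have hN_tendsto_zero : ∀ u : ℕ → boundedMeasurable mΩ, (∀ n ω, |u n ω| ≤ C + C) →
      (∀ ω, Tendsto (fun n => u n ω) atTop (𝓝 0)) → Tendsto (fun n => N (u n)) atTop (𝓝 0) :=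
    fun u hu hu0 => hN0 ▸ hN u 0 (C + C) hu (fun ω => by
      simpa using add_nonneg ((abs_nonneg _).trans (hw ω)) ((abs_nonneg _).trans (hw ω))) hu0
  have h₁ : Tendsto (fun n => N (v n - w)) atTop (𝓝 0) :=
    hN_tendsto_zero _ (fun n ω => (abs_sub _ _).trans (add_le_add (hv n ω) (hw ω)))
      (fun ω => by simpa using (hlim ω).sub_const (w ω))
  have h₂ : Tendsto (fun n => N (w - v n)) atTop (𝓝 0) :=
    hN_tendsto_zero _ (fun n ω => (abs_sub _ _).trans (add_le_add (hw ω) (hv n ω)))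
      (fun ω => by simpa using (hlim ω).const_sub (w ω))
  have hsub : Tendsto (fun n => g (v n) - g w) atTop (𝓝 0) := by
    refine tendsto_of_tendsto_of_tendsto_of_le_of_le (by simpa using h₂.neg) h₁ (fun n => ?_)
      (fun n => ?_)
    · have := hg (w - v n)
      rw [map_sub] at this
      linarith
    · rw [← map_sub]
      exact hg _
  exact tendsto_sub_nhds_zero_iff.1 hsub

theorem hasSum_apply_bmIndicator {mΩ : MeasurableSpace Ω} (g : boundedMeasurable mΩ →ₗ[ℝ] ℝ)
    (hg : BoundedPointwiseContinuous g)
    (hnonneg : ∀ A (hA : MeasurableSet A), 0 ≤ g (bmIndicator hA))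
    {A : ℕ → Set Ω} (hA : ∀ i, MeasurableSet (A i)) (hd : Pairwise (Function.onFun Disjoint A)) :
    HasSum (fun i => g (bmIndicator (hA i))) (g (bmIndicator (MeasurableSet.iUnion hA))) := by
  have hpartial : ∀ n, ∑ i ∈ Finset.range n, g (bmIndicator (hA i)) =
      g (bmIndicator (Finset.measurableSet_biUnion (Finset.range n) fun i _ => hA i)) := by
    intro n
    rw [← map_sum]
    congr 1
    ext ω
    simp only [Submodule.coe_sum, Finset.sum_apply, coe_bmIndicator]
    rw [Finset.indicator_biUnion_apply _ _ (hd.set_pairwise _)]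
  rw [hasSum_iff_tendsto_nat_of_nonneg (fun i => hnonneg _ _)]
  simp_rw [hpartial]
  refine hg _ _ 1 (fun n => abs_indicator_one_le _) (abs_indicator_one_le _) (fun ω => ?_)
  refine (tendsto_indicator_const_apply_iff_eventually _ (1 : ℝ) ω).2 ?_
  by_cases hω : ω ∈ ⋃ i, A i
  · obtain ⟨i, hi⟩ := Set.mem_iUnion.1 hω
    filter_upwards [eventually_gt_atTop i] with n hn
    exact iff_of_true (Set.mem_biUnion (Finset.mem_range.2 hn) hi) hω
  · refine Eventually.of_forall fun n => iff_of_false (fun h => hω ?_) hω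
    exact Set.iUnion₂_subset_iUnion _ _ h

theorem integral_eq_of_measureReal_eq {mΩ : MeasurableSpace Ω} {μ : Measure Ω}
    [IsFiniteMeasure μ] (g : boundedMeasurable mΩ →ₗ[ℝ] ℝ) (hg : BoundedPointwiseContinuous g)
    (hμ : ∀ A (hA : MeasurableSet A), μ.real A = g (bmIndicator hA)) (v : boundedMeasurable mΩ) :
    ∫ ω, v ω ∂μ = g v := by
  have hsimple : ∀ s : SimpleFunc Ω ℝ, ∫ ω, s ω ∂μ = g ⟨s, s.mem_boundedMeasurable⟩ := by
    intro s
    induction s using SimpleFunc.induction with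
    | @const c A hA =>
      set s := SimpleFunc.piecewise A hA (SimpleFunc.const Ω c) (SimpleFunc.const Ω 0)
      have hs_eq : ⇑s = A.indicator fun _ => c := rfl
      have hs : (⟨s, s.mem_boundedMeasurable⟩ : boundedMeasurable mΩ) = c • bmIndicator hA := by
        ext ω
        by_cases hω : ω ∈ A <;> simp [hs_eq, hω]
      rw [hs, map_smul, ← hμ, hs_eq, integral_indicator_const _ hA, smul_eq_mul, smul_eq_mul,
        mul_comm]
    | @add s₁ s₂ _ ih₁ ih₂ =>
      have hs : (⟨_, (s₁ + s₂).mem_boundedMeasurable⟩ : boundedMeasurable mΩ) =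
          ⟨s₁, s₁.mem_boundedMeasurable⟩ + ⟨s₂, s₂.mem_boundedMeasurable⟩ :=
        Subtype.ext (SimpleFunc.coe_add s₁ s₂)
      rw [hs, map_add, ← ih₁, ← ih₂, SimpleFunc.coe_add]
      exact integral_add s₁.integrable_of_isFiniteMeasure s₂.integrable_of_isFiniteMeasure
  obtain ⟨hv, C, hC⟩ := v.2
  have hCv : ∀ ω, |v ω| ≤ |C| := fun ω => (hC ω).trans (le_abs_self C)
  set s := hv.stronglyMeasurable.approxBounded |C|
  have hs_le : ∀ n ω, |s n ω| ≤ |C| := hv.stronglyMeasurable.norm_approxBounded_le (abs_nonneg C)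
  have hs_lim : ∀ ω, Tendsto (fun n => s n ω) atTop (𝓝 (v ω)) :=
    fun ω => hv.stronglyMeasurable.tendsto_approxBounded_of_norm_le (hCv ω)
  have hμ_lim : Tendsto (fun n => ∫ ω, s n ω ∂μ) atTop (𝓝 (∫ ω, v ω ∂μ)) :=
    tendsto_integral_of_dominated_convergence (fun _ => |C|)
      (fun n => (s n).aestronglyMeasurable) (integrable_const _)
      (fun n => ae_of_all _ (hs_le n)) (ae_of_all _ hs_lim)
  have hg_lim := hg (fun n => ⟨s n, (s n).mem_boundedMeasurable⟩) v |C| hs_le hCv hs_lim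
  simp_rw [← hsimple] at hg_lim
  exact tendsto_nhds_unique hμ_lim hg_lim

theorem exists_isFiniteMeasure_integral_eq {mΩ : MeasurableSpace Ω}
    (g : boundedMeasurable mΩ →ₗ[ℝ] ℝ) (hpos : ∀ v, (∀ ω, 0 ≤ v ω) → 0 ≤ g v)
    (hg : BoundedPointwiseContinuous g) :
    ∃ μ : Measure Ω, IsFiniteMeasure μ ∧ ∀ v, ∫ ω, v ω ∂μ = g v := by
  have hnonneg : ∀ A (hA : MeasurableSet A), 0 ≤ g (bmIndicator hA) :=
    fun A hA => hpos _ (Set.indicator_nonneg fun _ _ => zero_le_one)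
  have hempty : bmIndicator (mΩ := mΩ) MeasurableSet.empty = 0 := by ext; simp
  let μ : Measure Ω := Measure.ofMeasurable (fun A hA => ENNReal.ofReal (g (bmIndicator hA)))
    (by rw [hempty, map_zero, ENNReal.ofReal_zero])
    (fun A hA hd => by
      have hsum := hasSum_apply_bmIndicator g hg hnonneg hA hd
      rw [← hsum.tsum_eq, ENNReal.ofReal_tsum_of_nonneg (fun i => hnonneg _ _) hsum.summable])
  have hμ : ∀ A (hA : MeasurableSet A), μ.real A = g (bmIndicator hA) := fun A hA => by
    rw [measureReal_def, Measure.ofMeasurable_apply _ hA, ENNReal.toReal_ofReal (hnonneg A hA)]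
  have : IsFiniteMeasure μ :=
    ⟨by rw [Measure.ofMeasurable_apply _ MeasurableSet.univ]; exact ENNReal.ofReal_lt_top⟩
  exact ⟨μ, this, integral_eq_of_measureReal_eq g hg hμ⟩

theorem exists_measure_le_of_integral_mul_le {m mΩ : MeasurableSpace Ω} (hm : m ≤ mΩ)
    {ℙ : Measure Ω} {N : boundedMeasurable mΩ → ℝ}
    (hN_smul : ∀ c : ℝ, 0 < c → ∀ v, N (c • v) = c * N v) (hN_add : ∀ v w, N (v + w) ≤ N v + N w)
    (hN_mono : ∀ v w : boundedMeasurable mΩ, (v : Ω → ℝ) ≤ᵐ[ℙ] w → N v ≤ N w)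
    (hN_cont : BoundedPointwiseContinuous N) {E : Ω → ℝ} (hE : Integrable E ℙ)
    (hEN : ∀ v : boundedMeasurable mΩ, Measurable[m] v → ∫ ω, E ω * v ω ∂ℙ ≤ N v) :
    ∃ μ : Measure Ω, IsFiniteMeasure μ ∧ μ ≪ ℙ ∧ (∀ v, ∫ ω, v ω ∂μ ≤ N v) ∧
      ∀ s, MeasurableSet[m] s → μ.real s = ∫ ω in s, E ω ∂ℙ := by
  let p : Submodule ℝ (boundedMeasurable mΩ) :=
    (boundedMeasurable m).comap (boundedMeasurable mΩ).subtype
  obtain ⟨g, hgE, hgN⟩ := exists_extension_of_le_sublinear ⟨p, (weightedIntegral hE).domRestrict p⟩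
    N hN_smul hN_add (fun v => hEN v v.2.1)
  have hN0 : N 0 = 0 := by
    have h := hN_smul 2 two_pos 0
    rw [smul_zero] at h
    linarith
  have hg_nonpos : ∀ v : boundedMeasurable mΩ, (v : Ω → ℝ) ≤ᵐ[ℙ] 0 → g v ≤ 0 :=
    fun v hv => (hgN v).trans (hN0 ▸ hN_mono v 0 hv)
  obtain ⟨μ, hμfin, hμ⟩ := exists_isFiniteMeasure_integral_eq g
    (fun v hv => by simpa using hg_nonpos (-v) (ae_of_all _ fun ω => by simpa using hv ω))
    (hN_cont.of_le hN0 g hgN)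
  have hμ_real : ∀ A (hA : MeasurableSet A), μ.real A = g (bmIndicator hA) := fun A hA => by
    rw [← hμ, coe_bmIndicator, integral_indicator_one hA]
  refine ⟨μ, hμfin, Measure.AbsolutelyContinuous.mk fun A hA hA0 => ?_, fun v => hμ v ▸ hgN v,
    fun s hs => ?_⟩
  · rw [← measureReal_eq_zero_iff]
    refine le_antisymm ?_ measureReal_nonneg
    rw [hμ_real A hA]
    refine hg_nonpos _ ?_
    filter_upwards [measure_eq_zero_iff_ae_notMem.1 hA0] with ω hω
    simp [hω]
  · rw [hμ_real s (hm s hs), hgE ⟨bmIndicator (hm s hs), (bmIndicator hs).2⟩,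
      ← integral_indicator (hm s hs)]
    show ∫ ω, E ω * s.indicator 1 ω ∂ℙ = _
    simp_rw [← Set.indicator_mul_right, Pi.one_apply, mul_one]

theorem integral_condExp_mul_of_stronglyMeasurable {m mΩ : MeasurableSpace Ω} (hm : m ≤ mΩ)
    {μ : Measure Ω} [SigmaFinite (μ.trim hm)] {f g : Ω → ℝ} (hf : Integrable f μ)
    (hg : StronglyMeasurable[m] g) {C : ℝ} (hgC : ∀ ω, |g ω| ≤ C) :
    ∫ ω, μ[f|m] ω * g ω ∂μ = ∫ ω, f ω * g ω ∂μ := by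
  have hgf : Integrable (g * f) μ :=
    hf.bdd_mul (hg.mono hm).aestronglyMeasurable (ae_of_all _ hgC)
  calc ∫ ω, μ[f|m] ω * g ω ∂μ = ∫ ω, (g * μ[f|m]) ω ∂μ := by simp_rw [Pi.mul_apply, mul_comm]
    _ = ∫ ω, μ[g * f|m] ω ∂μ :=
      integral_congr_ae (condExp_mul_of_stronglyMeasurable_left hg hgf hf).symm
    _ = ∫ ω, f ω * g ω ∂μ := by rw [integral_condExp hm]; simp_rw [Pi.mul_apply, mul_comm]

theorem suppMemG_condExp_of_suppMem {m mΩ : MeasurableSpace Ω} (hm : m ≤ mΩ) {ℙ : Measure Ω}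
    [IsFiniteMeasure ℙ] {ρ : (Ω → ℝ) → ℝ} {D : Ω → ℝ} (hD : SuppMem ℙ ρ D) :
    SuppMemG m ℙ ρ (ℙ[D|m]) := by
  obtain ⟨-, hD_nonneg, hD_int, hD_one, hDρ⟩ := hD
  refine ⟨stronglyMeasurable_condExp, condExp_nonneg hD_nonneg, integrable_condExp,
    by rw [integral_condExp hm, hD_one], fun X hX ⟨C, hC⟩ => ?_⟩
  rw [integral_condExp_mul_of_stronglyMeasurable hm hD_int hX hC]
  exact hDρ X (hX.measurable.mono hm le_rfl) ⟨C, hC⟩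

theorem exists_suppMem_condExp_eq_of_suppMemG {m mΩ : MeasurableSpace Ω} (hm : m ≤ mΩ)
    {ℙ : Measure Ω} [IsFiniteMeasure ℙ] {ρ : (Ω → ℝ) → ℝ}
    (hρ_smul : ∀ c : ℝ, 0 < c → ∀ v : boundedMeasurable mΩ, ρ ⇑(c • v) = c * ρ v)
    (hρ_add : ∀ v w : boundedMeasurable mΩ, ρ ⇑(v + w) ≤ ρ v + ρ w)
    (hρ_mono : ∀ v w : boundedMeasurable mΩ, (v : Ω → ℝ) ≤ᵐ[ℙ] w → ρ v ≤ ρ w)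
    (hρ_cont : BoundedPointwiseContinuous fun v : boundedMeasurable mΩ => ρ v)
    {E : Ω → ℝ} (hE : SuppMemG m ℙ ρ E) : ∃ D, SuppMem ℙ ρ D ∧ ℙ[D|m] =ᵐ[ℙ] E := by
  obtain ⟨hE_meas, -, hE_int, hE_one, hEρ⟩ := hE
  obtain ⟨μ, hμfin, hμℙ, hμρ, hμE⟩ := exists_measure_le_of_integral_mul_le hm hρ_smul hρ_add
    hρ_mono hρ_cont hE_int (fun v hv => hEρ v hv.stronglyMeasurable v.2.2)
  set D : Ω → ℝ := fun ω => (μ.rnDeriv ℙ ω).toReal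
  have hD_int : Integrable D ℙ := Measure.integrable_toReal_rnDeriv
  have hD_set : ∀ s, ∫ ω in s, D ω ∂ℙ = μ.real s := Measure.setIntegral_toReal_rnDeriv hμℙ
  refine ⟨D, ⟨(μ.measurable_rnDeriv ℙ).ennreal_toReal, ae_of_all _ fun _ => ENNReal.toReal_nonneg,
    hD_int, ?_, fun X hX hXb => ?_⟩, ?_⟩
  · rw [← setIntegral_univ, hD_set, hμE _ MeasurableSet.univ, setIntegral_univ, hE_one]
  · calc ∫ ω, D ω * X ω ∂ℙ = ∫ ω, X ω ∂μ := integral_rnDeriv_smul hμℙ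
      _ ≤ ρ X := hμρ ⟨X, hX, hXb⟩
  · exact (ae_eq_condExp_of_forall_setIntegral_eq hm hD_int (fun s _ _ => hE_int.integrableOn)
      (fun s hs _ => by rw [hD_set, hμE s hs]) hE_meas.aestronglyMeasurable).symm

end

theorem stmt_7_general {Ω : Type*} (m : MeasurableSpace Ω) {mΩ : MeasurableSpace Ω} (hm : m ≤ mΩ)
    (ℙ : Measure Ω) [IsProbabilityMeasure ℙ] (ρ : (Ω → ℝ) → ℝ)
    (hmono : ∀ X Y : Ω → ℝ, Measurable X → (∃ C : ℝ, ∀ ω, |X ω| ≤ C) → Measurable Y →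
      (∃ C : ℝ, ∀ ω, |Y ω| ≤ C) → (∀ᵐ ω ∂ℙ, X ω ≤ Y ω) → ρ X ≤ ρ Y)
    (hconv : ∀ X Y : Ω → ℝ, Measurable X → (∃ C : ℝ, ∀ ω, |X ω| ≤ C) → Measurable Y →
      (∃ C : ℝ, ∀ ω, |Y ω| ≤ C) → ∀ lam : ℝ, 0 ≤ lam → lam ≤ 1 →
      ρ (fun ω => lam * X ω + (1 - lam) * Y ω) ≤ lam * ρ X + (1 - lam) * ρ Y)
    (hph : ∀ X : Ω → ℝ, Measurable X → (∃ C : ℝ, ∀ ω, |X ω| ≤ C) → ∀ lam : ℝ, 0 ≤ lam →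
      ρ (fun ω => lam * X ω) = lam * ρ X)
    (hLeb : ∀ (Xs : ℕ → Ω → ℝ) (X : Ω → ℝ) (C : ℝ), (∀ n, Measurable (Xs n)) →
      (∀ n ω, |Xs n ω| ≤ C) → Measurable X → (∀ ω, |X ω| ≤ C) →
      (∀ᵐ ω ∂ℙ, Filter.Tendsto (fun n => Xs n ω) Filter.atTop (nhds (X ω))) →
      Filter.Tendsto (fun n => ρ (Xs n)) Filter.atTop (nhds (ρ X))) :
    (∀ D : Ω → ℝ, SuppMem ℙ ρ D → SuppMemG m ℙ ρ (ℙ[D|m]))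
    ∧ (∀ E : Ω → ℝ, SuppMemG m ℙ ρ E →
        ∃ D : Ω → ℝ, SuppMem ℙ ρ D ∧ (ℙ[D|m]) =ᵐ[ℙ] E) := by
  refine ⟨fun D hD => suppMemG_condExp_of_suppMem hm hD,
    fun E hE => exists_suppMem_condExp_eq_of_suppMemG hm ?_ ?_ ?_ ?_ hE⟩
  · exact fun c hc v => hph v v.2.1 v.2.2 c hc.le
  · exact apply_add_le_of_convex_of_homogeneous (N := fun v : boundedMeasurable mΩ => ρ v)
      (fun x y t h₀ h₁ => hconv x y x.2.1 x.2.2 y.2.1 y.2.2 t h₀ h₁)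
      (fun x t ht => hph x x.2.1 x.2.2 t ht)
  · exact fun v w h => hmono v w v.2.1 v.2.2 w.2.1 w.2.2 h
  · exact fun v w C hv hw hlim =>
      hLeb (fun n => v n) w C (fun n => (v n).2.1) hv w.2.1 hw (ae_of_all _ hlim)

/-- for a Lebesgue-continuous coherent risk measure ρ, the set of restrictions
𝒮_ρ^𝓖 equals the supporting set of the restriction ρ̃ = ρ|_{L^∞(𝓖)}. -/
theorem stmt_7 {Ω : Type*} (m : MeasurableSpace Ω) {mΩ : MeasurableSpace Ω} (hm : m ≤ mΩ)
    (ℙ : Measure Ω) [IsProbabilityMeasure ℙ] (ρ : (Ω → ℝ) → ℝ)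
    (hcash : ∀ (X : Ω → ℝ) (c : ℝ), Measurable X → (∃ C : ℝ, ∀ ω, |X ω| ≤ C) →
      ρ (fun ω => X ω + c) = ρ X + c)
    (hmono : ∀ X Y : Ω → ℝ, Measurable X → (∃ C : ℝ, ∀ ω, |X ω| ≤ C) → Measurable Y →
      (∃ C : ℝ, ∀ ω, |Y ω| ≤ C) → (∀ᵐ ω ∂ℙ, X ω ≤ Y ω) → ρ X ≤ ρ Y)
    (hconv : ∀ X Y : Ω → ℝ, Measurable X → (∃ C : ℝ, ∀ ω, |X ω| ≤ C) → Measurable Y →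
      (∃ C : ℝ, ∀ ω, |Y ω| ≤ C) → ∀ lam : ℝ, 0 ≤ lam → lam ≤ 1 →
      ρ (fun ω => lam * X ω + (1 - lam) * Y ω) ≤ lam * ρ X + (1 - lam) * ρ Y)
    (hph : ∀ X : Ω → ℝ, Measurable X → (∃ C : ℝ, ∀ ω, |X ω| ≤ C) → ∀ lam : ℝ, 0 ≤ lam →
      ρ (fun ω => lam * X ω) = lam * ρ X)
    (hLeb : ∀ (Xs : ℕ → Ω → ℝ) (X : Ω → ℝ) (C : ℝ), (∀ n, Measurable (Xs n)) →
      (∀ n ω, |Xs n ω| ≤ C) → Measurable X → (∀ ω, |X ω| ≤ C) →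
      (∀ᵐ ω ∂ℙ, Filter.Tendsto (fun n => Xs n ω) Filter.atTop (nhds (X ω))) →
      Filter.Tendsto (fun n => ρ (Xs n)) Filter.atTop (nhds (ρ X))) :
    (∀ D : Ω → ℝ, SuppMem ℙ ρ D → SuppMemG m ℙ ρ (ℙ[D|m]))
    ∧ (∀ E : Ω → ℝ, SuppMemG m ℙ ρ E →
        ∃ D : Ω → ℝ, SuppMem ℙ ρ D ∧ (ℙ[D|m]) =ᵐ[ℙ] E) :=
  stmt_7_general m hm ℙ ρ hmono hconv hph hLeb
end

section
/- Let μ be a probability measure on (Ω,𝓖) absolutely continuous with respect to ℙ|_𝓖, and let τ: L^∞ → ℝ be defined by τ(X) = sup_{ν ∈ 𝓡} (𝔼^ν[X] − 𝔼^μ[X]) for some nonempty set 𝓡 of probability measures on (Ω,𝓕) with ν|_𝓖 = μ for all ν ∈ 𝓡, assuming the supremum is finite for all X. Then τ satisfies: (a) 𝓖-invariance, τ(X+Y)=τ(X) for all X ∈ L^∞ and 𝓖-measurable Y ∈ L^∞; (b) μ-monotonicity, 𝔼^μ[X]+τ(X) ≤ 𝔼^μ[Y]+τ(Y) for X ≤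 Y; (c) convexity; (d) positive homogeneity; and (e) Fatou continuity. -/
/-!
`τ` is the supremum over `ν ∈ 𝓡` of the functionals `X ↦ 𝔼^ν[X] − 𝔼^μ[X]`. Each of them is linear
on `L^∞`, continuous under bounded a.e. convergence (dominated convergence), and vanishes on
`𝓖`-measurable `X` because `𝔼[D_ν | 𝓖] = D_μ`. Invariance, convexity, positive homogeneity and
Fatou continuity pass to the supremum; μ-monotonicity holds because
`𝔼^μ[X] + (𝔼^ν[X] − 𝔼^μ[X]) = 𝔼^ν[X]` is monotone in `X`.
-/

open MeasureTheory Filter Topology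
open scoped ENNReal

noncomputable section

variable {Ω : Type*} {mΩ : MeasurableSpace Ω} {ℙ : Measure Ω}

/-- `𝔼^ν[X] − 𝔼^μ[X]`, where `D = dν/dℙ` and `Dμ = dμ/dℙ`. -/
def expectationGap (ℙ : Measure Ω) (Dμ D X : Ω → ℝ) : ℝ :=
  (∫ ω, D ω * X ω ∂ℙ) - ∫ ω, Dμ ω * X ω ∂ℙ

def supExpectationGap (ℙ : Measure Ω) (Dμ : Ω → ℝ) (𝓡 : Set (Ω → ℝ)) (X : Ω → ℝ) : ℝ :=
  sSup ((fun D => expectationGap ℙ Dμ D X) '' 𝓡)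

lemma csSup_image_le_liminf {ι β : Type*} [ConditionallyCompleteLinearOrder β]
    [TopologicalSpace β] [OrderTopology β] {s : Set ι} (hs : s.Nonempty) {f : ι → β}
    {F : ℕ → ι → β} {B : β} (hF : ∀ i ∈ s, Tendsto (fun n => F n i) atTop (𝓝 (f i)))
    (hB : ∀ n, ∀ i ∈ s, F n i ≤ B) :
    sSup (f '' s) ≤ liminf (fun n => sSup (F n '' s)) atTop := by
  have hbdd : ∀ n, BddAbove (F n '' s) := fun n => ⟨B, Set.forall_mem_image.2 (hB n)⟩
  refine csSup_le (hs.image f) (Set.forall_mem_image.2 fun i hi => ?_)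
  rw [← (hF i hi).liminf_eq]
  exact liminf_le_liminf (.of_forall fun n => le_csSup (hbdd n) (Set.mem_image_of_mem _ hi))
    (hF i hi).isBoundedUnder_ge
    (isCoboundedUnder_ge_of_le _ fun n => csSup_le (hs.image _) (Set.forall_mem_image.2 (hB n)))

section Integrals

variable {D X : Ω → ℝ}

lemma abs_integral_mul_le (hD : Integrable D ℙ) {C : ℝ} (hC : ∀ ω, |X ω| ≤ C) :
    |∫ ω, D ω * X ω ∂ℙ| ≤ (∫ ω, |D ω| ∂ℙ) * C := by
  rw [← integral_mul_const, ← Real.norm_eq_abs]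
  refine norm_integral_le_of_norm_le (hD.abs.mul_const C) (.of_forall fun ω => ?_)
  rw [Real.norm_eq_abs, abs_mul]
  exact mul_le_mul_of_nonneg_left (hC ω) (abs_nonneg _)

lemma tendsto_integral_mul_of_tendsto_ae {Xs : ℕ → Ω → ℝ} {C : ℝ} (hD : Integrable D ℙ)
    (hXs : ∀ n, AEStronglyMeasurable (Xs n) ℙ) (hC : ∀ n ω, |Xs n ω| ≤ C)
    (hlim : ∀ᵐ ω ∂ℙ, Tendsto (fun n => Xs n ω) atTop (𝓝 (X ω))) :
    Tendsto (fun n => ∫ ω, D ω * Xs n ω ∂ℙ) atTop (𝓝 (∫ ω, D ω * X ω ∂ℙ)) := by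
  refine tendsto_integral_of_dominated_convergence (fun ω => |D ω| * C)
    (fun n => hD.aestronglyMeasurable.mul (hXs n)) (hD.abs.mul_const C)
    (fun n => .of_forall fun ω => ?_) ?_
  · rw [Real.norm_eq_abs, abs_mul]
    exact mul_le_mul_of_nonneg_left (hC n ω) (abs_nonneg _)
  · filter_upwards [hlim] with ω hω
    exact hω.const_mul (D ω)

lemma integral_mul_eq_of_condExp_ae_eq {m : MeasurableSpace Ω} (hm : m ≤ mΩ)
    [IsFiniteMeasure ℙ] {Dμ Y : Ω → ℝ} (hD : Integrable D ℙ) (hDμ : ℙ[D|m] =ᵐ[ℙ] Dμ)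
    (hY : StronglyMeasurable[m] Y) (hYb : MemLp Y ∞ ℙ) :
    ∫ ω, D ω * Y ω ∂ℙ = ∫ ω, Dμ ω * Y ω ∂ℙ := by
  have hYD : Integrable (Y * D) ℙ := by
    rw [mul_comm]
    exact hD.mul_of_top_left hYb
  calc ∫ ω, D ω * Y ω ∂ℙ = ∫ ω, (ℙ[Y * D|m]) ω ∂ℙ := by
        rw [integral_condExp hm]; simp only [Pi.mul_apply, mul_comm]
    _ = ∫ ω, Y ω * (ℙ[D|m]) ω ∂ℙ :=
        integral_congr_ae (condExp_mul_of_stronglyMeasurable_left hY hYD hD)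
    _ = ∫ ω, Dμ ω * Y ω ∂ℙ := integral_congr_ae <| by
        filter_upwards [hDμ] with ω hω
        rw [hω, mul_comm]

end Integrals

section ExpectationGap

variable {Dμ D X Y : Ω → ℝ}

lemma expectationGap_add (hDμ : Integrable Dμ ℙ) (hD : Integrable D ℙ) (hX : MemLp X ∞ ℙ)
    (hY : MemLp Y ∞ ℙ) :
    expectationGap ℙ Dμ D (X + Y) = expectationGap ℙ Dμ D X + expectationGap ℙ Dμ D Y := by
  have hsplit : ∀ E : Ω → ℝ, Integrable E ℙ →
      ∫ ω, E ω * (X + Y) ω ∂ℙ = (∫ ω, E ω * X ω ∂ℙ) + ∫ ω, E ω * Y ω ∂ℙ := fun E hE => by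
    simp only [Pi.add_apply, mul_add]
    exact integral_add (hE.mul_of_top_left hX) (hE.mul_of_top_left hY)
  simp only [expectationGap, hsplit D hD, hsplit Dμ hDμ]
  ring

lemma expectationGap_const_mul (c : ℝ) :
    expectationGap ℙ Dμ D (fun ω => c * X ω) = c * expectationGap ℙ Dμ D X := by
  simp only [expectationGap, mul_left_comm _ c, integral_const_mul, mul_sub]

lemma expectationGap_eq_zero_of_stronglyMeasurable {m : MeasurableSpace Ω} (hm : m ≤ mΩ)
    [IsFiniteMeasure ℙ] (hD : Integrable D ℙ) (hDμ : ℙ[D|m] =ᵐ[ℙ] Dμ)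
    (hY : StronglyMeasurable[m] Y) (hYb : MemLp Y ∞ ℙ) : expectationGap ℙ Dμ D Y = 0 :=
  sub_eq_zero.2 (integral_mul_eq_of_condExp_ae_eq hm hD hDμ hY hYb)

lemma expectationGap_le_of_abs_le (hDμ : Integrable Dμ ℙ) (hD : Integrable D ℙ)
    (hD₀ : 0 ≤ᵐ[ℙ] D) (hD₁ : ∫ ω, D ω ∂ℙ = 1) {C : ℝ} (hC : ∀ ω, |X ω| ≤ C) :
    expectationGap ℙ Dμ D X ≤ (1 + ∫ ω, |Dμ ω| ∂ℙ) * C := by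
  have hDabs : ∫ ω, |D ω| ∂ℙ = 1 := by
    rw [← hD₁]
    exact integral_congr_ae (hD₀.mono fun ω h => abs_of_nonneg h)
  have hDX := abs_integral_mul_le hD hC
  have hDμX := abs_integral_mul_le hDμ hC
  rw [hDabs] at hDX
  unfold expectationGap
  linarith [(abs_le.1 hDX).2, (abs_le.1 hDμX).1]

end ExpectationGap

section SupExpectationGap

variable {Dμ X Y : Ω → ℝ} {𝓡 : Set (Ω → ℝ)}

lemma expectationGap_le_supExpectationGap {D : Ω → ℝ} (hD : D ∈ 𝓡)
    (hbdd : BddAbove ((fun D => expectationGap ℙ Dμ D X) '' 𝓡)) :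
    expectationGap ℙ Dμ D X ≤ supExpectationGap ℙ Dμ 𝓡 X :=
  le_csSup hbdd (Set.mem_image_of_mem _ hD)

lemma supExpectationGap_le (h𝓡 : 𝓡.Nonempty) {b : ℝ}
    (hb : ∀ D ∈ 𝓡, expectationGap ℙ Dμ D X ≤ b) : supExpectationGap ℙ Dμ 𝓡 X ≤ b :=
  csSup_le (h𝓡.image _) (Set.forall_mem_image.2 hb)

lemma supExpectationGap_add_of_stronglyMeasurable {m : MeasurableSpace Ω} (hm : m ≤ mΩ)
    [IsFiniteMeasure ℙ] (hDμ : Integrable Dμ ℙ) (h𝓡int : ∀ D ∈ 𝓡, Integrable D ℙ)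
    (h𝓡cond : ∀ D ∈ 𝓡, ℙ[D|m] =ᵐ[ℙ] Dμ) (hX : MemLp X ∞ ℙ) (hYb : MemLp Y ∞ ℙ)
    (hY : StronglyMeasurable[m] Y) :
    supExpectationGap ℙ Dμ 𝓡 (X + Y) = supExpectationGap ℙ Dμ 𝓡 X := by
  refine congrArg sSup (Set.image_congr fun D hD => ?_)
  rw [expectationGap_add hDμ (h𝓡int D hD) hX hYb,
    expectationGap_eq_zero_of_stronglyMeasurable hm (h𝓡int D hD) (h𝓡cond D hD) hY hYb, add_zero]

lemma integral_add_supExpectationGap_mono (h𝓡 : 𝓡.Nonempty)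
    (h𝓡int : ∀ D ∈ 𝓡, Integrable D ℙ) (h𝓡pos : ∀ D ∈ 𝓡, 0 ≤ᵐ[ℙ] D) (hX : MemLp X ∞ ℙ)
    (hY : MemLp Y ∞ ℙ) (hYbdd : BddAbove ((fun D => expectationGap ℙ Dμ D Y) '' 𝓡))
    (hXY : X ≤ᵐ[ℙ] Y) :
    (∫ ω, Dμ ω * X ω ∂ℙ) + supExpectationGap ℙ Dμ 𝓡 X
      ≤ (∫ ω, Dμ ω * Y ω ∂ℙ) + supExpectationGap ℙ Dμ 𝓡 Y := by
  rw [← le_sub_iff_add_le']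
  refine supExpectationGap_le h𝓡 fun D hD => ?_
  have hmono : ∫ ω, D ω * X ω ∂ℙ ≤ ∫ ω, D ω * Y ω ∂ℙ := by
    refine integral_mono_ae ((h𝓡int D hD).mul_of_top_left hX)
      ((h𝓡int D hD).mul_of_top_left hY) ?_
    filter_upwards [h𝓡pos D hD, hXY] with ω hD₀ hXYω
    exact mul_le_mul_of_nonneg_left hXYω hD₀
  have hYle := expectationGap_le_supExpectationGap hD hYbdd
  unfold expectationGap at hYle ⊢
  linarith

lemma supExpectationGap_add_mul_le (h𝓡 : 𝓡.Nonempty) (hDμ : Integrable Dμ ℙ)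
    (h𝓡int : ∀ D ∈ 𝓡, Integrable D ℙ) (hX : MemLp X ∞ ℙ) (hY : MemLp Y ∞ ℙ)
    (hXbdd : BddAbove ((fun D => expectationGap ℙ Dμ D X) '' 𝓡))
    (hYbdd : BddAbove ((fun D => expectationGap ℙ Dμ D Y) '' 𝓡)) {a b : ℝ} (ha : 0 ≤ a)
    (hb : 0 ≤ b) :
    supExpectationGap ℙ Dμ 𝓡 (fun ω => a * X ω + b * Y ω)
      ≤ a * supExpectationGap ℙ Dμ 𝓡 X + b * supExpectationGap ℙ Dμ 𝓡 Y := by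
  refine supExpectationGap_le h𝓡 fun D hD => ?_
  change expectationGap ℙ Dμ D ((fun ω => a * X ω) + fun ω => b * Y ω) ≤ _
  rw [expectationGap_add hDμ (h𝓡int D hD) (hX.const_mul a) (hY.const_mul b),
    expectationGap_const_mul, expectationGap_const_mul]
  gcongr
  · exact expectationGap_le_supExpectationGap hD hXbdd
  · exact expectationGap_le_supExpectationGap hD hYbdd

lemma supExpectationGap_const_mul {c : ℝ} (hc : 0 ≤ c) :
    supExpectationGap ℙ Dμ 𝓡 (fun ω => c * X ω) = c * supExpectationGap ℙ Dμ 𝓡 X := by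
  simp only [supExpectationGap, expectationGap_const_mul]
  rw [← smul_eq_mul, ← Real.sSup_smul_of_nonneg hc, ← Set.image_smul, Set.image_image]
  rfl

lemma supExpectationGap_le_liminf (h𝓡 : 𝓡.Nonempty) (hDμ : Integrable Dμ ℙ)
    (h𝓡int : ∀ D ∈ 𝓡, Integrable D ℙ) (h𝓡pos : ∀ D ∈ 𝓡, 0 ≤ᵐ[ℙ] D)
    (h𝓡one : ∀ D ∈ 𝓡, ∫ ω, D ω ∂ℙ = 1) {Xs : ℕ → Ω → ℝ} {C : ℝ}
    (hXs : ∀ n, AEStronglyMeasurable (Xs n) ℙ) (hC : ∀ n ω, |Xs n ω| ≤ C)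
    (hlim : ∀ᵐ ω ∂ℙ, Tendsto (fun n => Xs n ω) atTop (𝓝 (X ω))) :
    supExpectationGap ℙ Dμ 𝓡 X ≤ liminf (fun n => supExpectationGap ℙ Dμ 𝓡 (Xs n)) atTop :=
  csSup_image_le_liminf h𝓡
    (fun D hD => (tendsto_integral_mul_of_tendsto_ae (h𝓡int D hD) hXs hC hlim).sub
      (tendsto_integral_mul_of_tendsto_ae hDμ hXs hC hlim))
    fun n D hD => expectationGap_le_of_abs_le hDμ (h𝓡int D hD) (h𝓡pos D hD) (h𝓡one D hD) (hC n)

end SupExpectationGap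

end

theorem stmt_9_general {Ω : Type*} (m : MeasurableSpace Ω) {mΩ : MeasurableSpace Ω} (hm : m ≤ mΩ)
    (ℙ : Measure Ω) [IsProbabilityMeasure ℙ]
    (Dμ : Ω → ℝ)
    (hDμint : Integrable Dμ ℙ)
    (𝓡 : Set (Ω → ℝ)) (h𝓡ne : 𝓡.Nonempty)
    (h𝓡 : ∀ D ∈ 𝓡, Measurable D ∧ (∀ᵐ ω ∂ℙ, 0 ≤ D ω) ∧ Integrable D ℙ ∧
      (∫ ω, D ω ∂ℙ) = 1 ∧ (ℙ[D|m]) =ᵐ[ℙ] Dμ)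
    (τ : (Ω → ℝ) → ℝ)
    (hτ : ∀ X : Ω → ℝ,
      τ X = sSup ((fun D => (∫ ω, D ω * X ω ∂ℙ) - ∫ ω, Dμ ω * X ω ∂ℙ) '' 𝓡))
    (hfin : ∀ X : Ω → ℝ, Measurable X → (∃ C : ℝ, ∀ ω, |X ω| ≤ C) →
      BddAbove ((fun D => (∫ ω, D ω * X ω ∂ℙ) - ∫ ω, Dμ ω * X ω ∂ℙ) '' 𝓡)) :
    -- (a) 𝓖-invariance
    (∀ X Y : Ω → ℝ, Measurable X → (∃ C : ℝ, ∀ ω, |X ω| ≤ C) →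
        StronglyMeasurable[m] Y → (∃ C : ℝ, ∀ ω, |Y ω| ≤ C) → τ (X + Y) = τ X)
    -- (b) μ-monotonicity
    ∧ (∀ X Y : Ω → ℝ, Measurable X → (∃ C : ℝ, ∀ ω, |X ω| ≤ C) → Measurable Y →
        (∃ C : ℝ, ∀ ω, |Y ω| ≤ C) → (∀ᵐ ω ∂ℙ, X ω ≤ Y ω) →
        (∫ ω, Dμ ω * X ω ∂ℙ) + τ X ≤ (∫ ω, Dμ ω * Y ω ∂ℙ) + τ Y)
    -- (c) convexity
    ∧ (∀ X Y : Ω → ℝ, Measurable X → (∃ C : ℝ, ∀ ω, |X ω| ≤ C) → Measurable Y →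
        (∃ C : ℝ, ∀ ω, |Y ω| ≤ C) → ∀ lam : ℝ, 0 ≤ lam → lam ≤ 1 →
        τ (fun ω => lam * X ω + (1 - lam) * Y ω) ≤ lam * τ X + (1 - lam) * τ Y)
    -- (d) positive homogeneity
    ∧ (∀ X : Ω → ℝ, Measurable X → (∃ C : ℝ, ∀ ω, |X ω| ≤ C) → ∀ lam : ℝ, 0 ≤ lam →
        τ (fun ω => lam * X ω) = lam * τ X)
    -- (e) Fatou continuity
    ∧ (∀ (Xs : ℕ → Ω → ℝ) (X : Ω → ℝ) (C : ℝ), (∀ n, Measurable (Xs n)) →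
        (∀ n ω, |Xs n ω| ≤ C) → Measurable X → (∀ ω, |X ω| ≤ C) →
        (∀ᵐ ω ∂ℙ, Filter.Tendsto (fun n => Xs n ω) Filter.atTop (nhds (X ω))) →
        τ X ≤ Filter.liminf (fun n => τ (Xs n)) Filter.atTop) := by
  obtain rfl : τ = supExpectationGap ℙ Dμ 𝓡 := funext hτ
  have h𝓡pos : ∀ D ∈ 𝓡, 0 ≤ᵐ[ℙ] D := fun D hD => (h𝓡 D hD).2.1
  have h𝓡int : ∀ D ∈ 𝓡, Integrable D ℙ := fun D hD => (h𝓡 D hD).2.2.1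
  have h𝓡one : ∀ D ∈ 𝓡, ∫ ω, D ω ∂ℙ = 1 := fun D hD => (h𝓡 D hD).2.2.2.1
  have h𝓡cond : ∀ D ∈ 𝓡, ℙ[D|m] =ᵐ[ℙ] Dμ := fun D hD => (h𝓡 D hD).2.2.2.2
  have hLinf : ∀ X : Ω → ℝ, AEStronglyMeasurable X ℙ → (∃ C : ℝ, ∀ ω, |X ω| ≤ C) →
      MemLp X ∞ ℙ := fun X hX ⟨C, hC⟩ => memLp_top_of_bound hX C (.of_forall hC)
  refine ⟨fun X Y hX hXb hY hYb => ?_, fun X Y hX hXb hY hYb hXY => ?_,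
    fun X Y hX hXb hY hYb lam h₀ h₁ => ?_, fun X _ _ lam h₀ => supExpectationGap_const_mul h₀,
    fun Xs X C hXs hC _ _ hlim => ?_⟩
  · exact supExpectationGap_add_of_stronglyMeasurable hm hDμint h𝓡int h𝓡cond
      (hLinf X hX.aestronglyMeasurable hXb)
      (hLinf Y (hY.mono hm).aestronglyMeasurable hYb) hY
  · exact integral_add_supExpectationGap_mono h𝓡ne h𝓡int h𝓡pos
      (hLinf X hX.aestronglyMeasurable hXb) (hLinf Y hY.aestronglyMeasurable hYb)
      (hfin Y hY hYb) hXY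
  · exact supExpectationGap_add_mul_le h𝓡ne hDμint h𝓡int
      (hLinf X hX.aestronglyMeasurable hXb) (hLinf Y hY.aestronglyMeasurable hYb)
      (hfin X hX hXb) (hfin Y hY hYb) h₀ (sub_nonneg.2 h₁)
  · exact supExpectationGap_le_liminf h𝓡ne hDμint h𝓡int h𝓡pos h𝓡one
      (fun n => (hXs n).aestronglyMeasurable) hC hlim

/-- the functional τ(X) = sup_{ν∈𝓡}(𝔼^ν[X] − 𝔼^μ[X]), where every ν ∈ 𝓡 is a
probability measure ≪ ℙ with ν|_𝓖 = μ, is a Fatou μ-coherent adjustment: it is 𝓖-invariant,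
μ-monotone, convex, positively homogeneous, and Fatou continuous. -/
theorem stmt_9 {Ω : Type*} (m : MeasurableSpace Ω) {mΩ : MeasurableSpace Ω} (hm : m ≤ mΩ)
    (ℙ : Measure Ω) [IsProbabilityMeasure ℙ]
    (Dμ : Ω → ℝ) (hDμmeas : StronglyMeasurable[m] Dμ) (hDμpos : ∀ᵐ ω ∂ℙ, 0 ≤ Dμ ω)
    (hDμint : Integrable Dμ ℙ) (hDμone : (∫ ω, Dμ ω ∂ℙ) = 1)
    (𝓡 : Set (Ω → ℝ)) (h𝓡ne : 𝓡.Nonempty)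
    (h𝓡 : ∀ D ∈ 𝓡, Measurable D ∧ (∀ᵐ ω ∂ℙ, 0 ≤ D ω) ∧ Integrable D ℙ ∧
      (∫ ω, D ω ∂ℙ) = 1 ∧ (ℙ[D|m]) =ᵐ[ℙ] Dμ)
    (τ : (Ω → ℝ) → ℝ)
    (hτ : ∀ X : Ω → ℝ,
      τ X = sSup ((fun D => (∫ ω, D ω * X ω ∂ℙ) - ∫ ω, Dμ ω * X ω ∂ℙ) '' 𝓡))
    (hfin : ∀ X : Ω → ℝ, Measurable X → (∃ C : ℝ, ∀ ω, |X ω| ≤ C) →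
      BddAbove ((fun D => (∫ ω, D ω * X ω ∂ℙ) - ∫ ω, Dμ ω * X ω ∂ℙ) '' 𝓡)) :
    -- (a) 𝓖-invariance
    (∀ X Y : Ω → ℝ, Measurable X → (∃ C : ℝ, ∀ ω, |X ω| ≤ C) →
        StronglyMeasurable[m] Y → (∃ C : ℝ, ∀ ω, |Y ω| ≤ C) → τ (X + Y) = τ X)
    -- (b) μ-monotonicity
    ∧ (∀ X Y : Ω → ℝ, Measurable X → (∃ C : ℝ, ∀ ω, |X ω| ≤ C) → Measurable Y →
        (∃ C : ℝ, ∀ ω, |Y ω| ≤ C) → (∀ᵐ ω ∂ℙ, X ω ≤ Y ω) →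
        (∫ ω, Dμ ω * X ω ∂ℙ) + τ X ≤ (∫ ω, Dμ ω * Y ω ∂ℙ) + τ Y)
    -- (c) convexity
    ∧ (∀ X Y : Ω → ℝ, Measurable X → (∃ C : ℝ, ∀ ω, |X ω| ≤ C) → Measurable Y →
        (∃ C : ℝ, ∀ ω, |Y ω| ≤ C) → ∀ lam : ℝ, 0 ≤ lam → lam ≤ 1 →
        τ (fun ω => lam * X ω + (1 - lam) * Y ω) ≤ lam * τ X + (1 - lam) * τ Y)
    -- (d) positive homogeneity
    ∧ (∀ X : Ω → ℝ, Measurable X → (∃ C : ℝ, ∀ ω, |X ω| ≤ C) → ∀ lam : ℝ, 0 ≤ lam →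
        τ (fun ω => lam * X ω) = lam * τ X)
    -- (e) Fatou continuity
    ∧ (∀ (Xs : ℕ → Ω → ℝ) (X : Ω → ℝ) (C : ℝ), (∀ n, Measurable (Xs n)) →
        (∀ n ω, |Xs n ω| ≤ C) → Measurable X → (∀ ω, |X ω| ≤ C) →
        (∀ᵐ ω ∂ℙ, Filter.Tendsto (fun n => Xs n ω) Filter.atTop (nhds (X ω))) →
        τ X ≤ Filter.liminf (fun n => τ (Xs n)) Filter.atTop) :=
  stmt_9_general m hm ℙ Dμ hDμint 𝓡 h𝓡ne h𝓡 τ hτ hfin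
end

section
/- Let μ be a probability measure on (Ω,𝓖) absolutely continuous with respect to ℙ|_𝓖 and ρ: L^∞ → ℝ. Then ρ is a Fatou coherent risk measure with ρ(X) = 𝔼^μ[X] for all 𝓖-measurable X ∈ L^∞ if and only if there exists a Fatou μ-coherent adjustment τ such that ρ = 𝔼^μ + τ. -/
/-!
Write `E X = ∫ Dμ * X dℙ` for the `μ`-expectation and `τ = ρ - E`. Since `E` is linear, fixes
constants and (by dominated convergence) is continuous along bounded a.e. convergent sequences,
monotonicity, convexity, positive homogeneity and the Fatou property pass back and forth between
`ρ` and `τ`. What remains is that cash invariance of `ρ` together with `ρ = E` on `L^∞(𝓖)`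
corresponds to `𝓖`-invariance of `τ`: a subadditive `ρ` is additive in every direction `Y` with
`ρ (-Y) = -ρ Y`, and `𝓖`-measurable `Y` are such directions because `ρ = E` there.
-/

open MeasureTheory Filter Topology

lemma Filter.liminf_sub_of_tendsto {ι : Type*} {l : Filter ι} [l.NeBot] {u v : ι → ℝ} {c : ℝ}
    (hu_le : IsBoundedUnder (· ≤ ·) l u) (hu_ge : IsBoundedUnder (· ≥ ·) l u)
    (hv : Tendsto v l (𝓝 c)) :
    liminf (fun i => u i - v i) l = liminf u l - c := by
  have hw : Tendsto (-v) l (𝓝 (-c)) := hv.neg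
  have h_ge : liminf u l + liminf (-v) l ≤ liminf (u + -v) l :=
    le_liminf_add hu_ge hu_le hw.isBoundedUnder_ge hw.isBoundedUnder_le.isCoboundedUnder_ge
  have h_le : liminf (-v + u) l ≤ limsup (-v) l + liminf u l :=
    liminf_add_le hw.isBoundedUnder_ge hw.isBoundedUnder_le hu_ge hu_le.isCoboundedUnder_ge
  rw [hw.liminf_eq] at h_ge
  rw [add_comm, hw.limsup_eq] at h_le
  have h_sub : (fun i => u i - v i) = u + -v := funext fun i => sub_eq_add_neg _ _
  rw [h_sub]
  linarith

namespace RiskMeasure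

section Bounded

variable {Ω : Type*} {X Y : Ω → ℝ}

lemma exists_abs_le_add (hX : ∃ C : ℝ, ∀ ω, |X ω| ≤ C) (hY : ∃ C : ℝ, ∀ ω, |Y ω| ≤ C) :
    ∃ C : ℝ, ∀ ω, |X ω + Y ω| ≤ C := by
  obtain ⟨CX, hCX⟩ := hX
  obtain ⟨CY, hCY⟩ := hY
  exact ⟨CX + CY, fun ω => (abs_add_le _ _).trans (add_le_add (hCX ω) (hCY ω))⟩

lemma exists_abs_le_const_mul (a : ℝ) (hX : ∃ C : ℝ, ∀ ω, |X ω| ≤ C) :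
    ∃ C : ℝ, ∀ ω, |a * X ω| ≤ C := by
  obtain ⟨C, hC⟩ := hX
  exact ⟨|a| * C, fun ω => by
    rw [abs_mul]; exact mul_le_mul_of_nonneg_left (hC ω) (abs_nonneg a)⟩

lemma exists_abs_le_neg (hX : ∃ C : ℝ, ∀ ω, |X ω| ≤ C) : ∃ C : ℝ, ∀ ω, |(-X) ω| ≤ C := by
  simpa only [Pi.neg_apply, abs_neg] using hX

lemma exists_abs_le_const (c : ℝ) : ∃ C : ℝ, ∀ _ : Ω, |c| ≤ C :=
  ⟨|c|, fun _ => le_rfl⟩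

end Bounded

-- `m` (the sub-σ-algebra 𝓖) precedes `mΩ`, so that `Measurable` refers to `mΩ`.
variable {Ω : Type*} {m : MeasurableSpace Ω} [mΩ : MeasurableSpace Ω] {ℙ : Measure Ω}

def CashInvariant (ρ : (Ω → ℝ) → ℝ) : Prop :=
  ∀ (X : Ω → ℝ) (c : ℝ), Measurable X → (∃ C : ℝ, ∀ ω, |X ω| ≤ C) →
    ρ (fun ω => X ω + c) = ρ X + c

def MonotoneAE (ℙ : Measure Ω) (ρ : (Ω → ℝ) → ℝ) : Prop :=
  ∀ X Y : Ω → ℝ, Measurable X → (∃ C : ℝ, ∀ ω, |X ω| ≤ C) → Measurable Y →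
    (∃ C : ℝ, ∀ ω, |Y ω| ≤ C) → (∀ᵐ ω ∂ℙ, X ω ≤ Y ω) → ρ X ≤ ρ Y

def ConvexOnBounded (ρ : (Ω → ℝ) → ℝ) : Prop :=
  ∀ X Y : Ω → ℝ, Measurable X → (∃ C : ℝ, ∀ ω, |X ω| ≤ C) → Measurable Y →
    (∃ C : ℝ, ∀ ω, |Y ω| ≤ C) → ∀ lam : ℝ, 0 ≤ lam → lam ≤ 1 →
    ρ (fun ω => lam * X ω + (1 - lam) * Y ω) ≤ lam * ρ X + (1 - lam) * ρ Y

def PosHomogeneous (ρ : (Ω → ℝ) → ℝ) : Prop :=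
  ∀ X : Ω → ℝ, Measurable X → (∃ C : ℝ, ∀ ω, |X ω| ≤ C) → ∀ lam : ℝ, 0 ≤ lam →
    ρ (fun ω => lam * X ω) = lam * ρ X

def FatouProperty (ℙ : Measure Ω) (ρ : (Ω → ℝ) → ℝ) : Prop :=
  ∀ (Xs : ℕ → Ω → ℝ) (X : Ω → ℝ) (C : ℝ), (∀ n, Measurable (Xs n)) →
    (∀ n ω, |Xs n ω| ≤ C) → Measurable X → (∀ ω, |X ω| ≤ C) →
    (∀ᵐ ω ∂ℙ, Tendsto (fun n => Xs n ω) atTop (𝓝 (X ω))) →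
    ρ X ≤ liminf (fun n => ρ (Xs n)) atTop

variable (m) in
def GInvariant (τ : (Ω → ℝ) → ℝ) : Prop :=
  ∀ X Y : Ω → ℝ, Measurable X → (∃ C : ℝ, ∀ ω, |X ω| ≤ C) →
    StronglyMeasurable[m] Y → (∃ C : ℝ, ∀ ω, |Y ω| ≤ C) → τ (X + Y) = τ X

structure IsExpectationFunctional (ℙ : Measure Ω) (E : (Ω → ℝ) → ℝ) : Prop where
  map_add : ∀ X Y : Ω → ℝ, Measurable X → (∃ C : ℝ, ∀ ω, |X ω| ≤ C) → Measurable Y →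
    (∃ C : ℝ, ∀ ω, |Y ω| ≤ C) → E (X + Y) = E X + E Y
  map_const_mul : ∀ (a : ℝ) (X : Ω → ℝ), E (fun ω => a * X ω) = a * E X
  map_const : ∀ c : ℝ, E (fun _ => c) = c
  tendsto : ∀ (Xs : ℕ → Ω → ℝ) (X : Ω → ℝ) (C : ℝ), (∀ n, Measurable (Xs n)) →
    (∀ n ω, |Xs n ω| ≤ C) → (∀ᵐ ω ∂ℙ, Tendsto (fun n => Xs n ω) atTop (𝓝 (X ω))) →
    Tendsto (fun n => E (Xs n)) atTop (𝓝 (E X))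

section DensityExpectation

variable {Dμ : Ω → ℝ}

lemma integrable_mul_of_bounded (hD : Integrable Dμ ℙ) {X : Ω → ℝ} (hX : Measurable X)
    (hXb : ∃ C : ℝ, ∀ ω, |X ω| ≤ C) : Integrable (fun ω => Dμ ω * X ω) ℙ := by
  obtain ⟨C, hC⟩ := hXb
  exact hD.mul_bdd hX.aestronglyMeasurable
    (.of_forall fun ω => (Real.norm_eq_abs _).trans_le (hC ω))

lemma isExpectationFunctional_integral_mul (hD : Integrable Dμ ℙ) (hone : ∫ ω, Dμ ω ∂ℙ = 1) :
    IsExpectationFunctional ℙ (fun X => ∫ ω, Dμ ω * X ω ∂ℙ) where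
  map_add X Y hX hXb hY hYb := by
    simp only [Pi.add_apply, mul_add]
    exact integral_add (integrable_mul_of_bounded hD hX hXb) (integrable_mul_of_bounded hD hY hYb)
  map_const_mul a X := by
    simp only [mul_left_comm _ a]
    exact integral_const_mul a _
  map_const c := by
    rw [integral_mul_const, hone, one_mul]
  tendsto Xs X C hXs hXsb hconv := by
    refine tendsto_integral_of_dominated_convergence (fun ω => |Dμ ω| * C)
      (fun n => hD.1.mul (hXs n).aestronglyMeasurable) (hD.abs.mul_const C) (fun n => ?_) ?_
    · refine .of_forall fun ω => ?_
      rw [Real.norm_eq_abs, abs_mul]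
      exact mul_le_mul_of_nonneg_left (hXsb n ω) (abs_nonneg _)
    · filter_upwards [hconv] with ω hω
      exact hω.const_mul (Dμ ω)

end DensityExpectation

section Coherent

variable {ρ : (Ω → ℝ) → ℝ}

lemma PosHomogeneous.map_zero (hhom : PosHomogeneous ρ) : ρ 0 = 0 := by
  simpa [Pi.zero_def] using hhom 0 measurable_const (exists_abs_le_const 0) 0 le_rfl

lemma CashInvariant.map_const (hcash : CashInvariant ρ) (hhom : PosHomogeneous ρ) (c : ℝ) :
    ρ (fun _ => c) = c := by
  simpa [hhom.map_zero] using hcash 0 c measurable_const (exists_abs_le_const 0)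

lemma MonotoneAE.abs_map_le (hmono : MonotoneAE ℙ ρ) (hconst : ∀ c, ρ (fun _ => c) = c)
    (X : Ω → ℝ) (C : ℝ) (hX : Measurable X) (hC : ∀ ω, |X ω| ≤ C) : |ρ X| ≤ C := by
  have h_le : ρ X ≤ ρ (fun _ => C) :=
    hmono _ _ hX ⟨C, hC⟩ measurable_const (exists_abs_le_const C)
      (.of_forall fun ω => (abs_le.1 (hC ω)).2)
  have h_ge : ρ (fun _ => -C) ≤ ρ X :=
    hmono _ _ measurable_const (exists_abs_le_const (-C)) hX ⟨C, hC⟩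
      (.of_forall fun ω => (abs_le.1 (hC ω)).1)
  rw [hconst] at h_le h_ge
  exact abs_le.2 ⟨h_ge, h_le⟩

lemma ConvexOnBounded.map_add_le (hconv : ConvexOnBounded ρ) (hhom : PosHomogeneous ρ)
    {X Y : Ω → ℝ} (hX : Measurable X) (hXb : ∃ C : ℝ, ∀ ω, |X ω| ≤ C) (hY : Measurable Y)
    (hYb : ∃ C : ℝ, ∀ ω, |Y ω| ≤ C) : ρ (X + Y) ≤ ρ X + ρ Y := by
  have h := hconv _ _ (hX.const_mul 2) (exists_abs_le_const_mul 2 hXb) (hY.const_mul 2)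
    (exists_abs_le_const_mul 2 hYb) (1 / 2) (by norm_num) (by norm_num)
  have h_mid : (fun ω => 1 / 2 * (2 * X ω) + (1 - 1 / 2) * (2 * Y ω)) = X + Y :=
    funext fun ω => by simp only [Pi.add_apply]; ring
  rw [h_mid, hhom X hX hXb 2 zero_le_two, hhom Y hY hYb 2 zero_le_two] at h
  linarith

lemma ConvexOnBounded.map_add_of_map_neg (hconv : ConvexOnBounded ρ) (hhom : PosHomogeneous ρ)
    {X Y : Ω → ℝ} (hX : Measurable X) (hXb : ∃ C : ℝ, ∀ ω, |X ω| ≤ C) (hY : Measurable Y)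
    (hYb : ∃ C : ℝ, ∀ ω, |Y ω| ≤ C) (hneg : ρ (-Y) = -ρ Y) : ρ (X + Y) = ρ X + ρ Y := by
  have h_le := hconv.map_add_le hhom hX hXb hY hYb
  have h_ge := hconv.map_add_le hhom (hX.add hY) (exists_abs_le_add hXb hYb) hY.neg
    (exists_abs_le_neg hYb)
  rw [add_neg_cancel_right, hneg] at h_ge
  linarith

end Coherent

lemma GInvariant.map_eq_zero {τ : (Ω → ℝ) → ℝ} (hinv : GInvariant m τ) (hhom : PosHomogeneous τ)
    {Y : Ω → ℝ} (hY : StronglyMeasurable[m] Y) (hYb : ∃ C : ℝ, ∀ ω, |Y ω| ≤ C) : τ Y = 0 := by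
  simpa [hhom.map_zero] using hinv 0 Y measurable_const (exists_abs_le_const 0) hY hYb

lemma monotoneAE_congr {ρ ρ' : (Ω → ℝ) → ℝ}
    (h : ∀ X, Measurable X → (∃ C : ℝ, ∀ ω, |X ω| ≤ C) → ρ X = ρ' X) :
    MonotoneAE ℙ ρ ↔ MonotoneAE ℙ ρ' := by
  refine forall₂_congr fun X Y => forall₄_congr fun hX hXb hY hYb => ?_
  rw [h X hX hXb, h Y hY hYb]

namespace IsExpectationFunctional

variable {E ρ τ : (Ω → ℝ) → ℝ}

lemma map_neg (hE : IsExpectationFunctional ℙ E) (Y : Ω → ℝ) : E (-Y) = -E Y := by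
  rw [show -Y = fun ω => -1 * Y ω by ext; simp, hE.map_const_mul]
  ring

lemma map_convexCombination (hE : IsExpectationFunctional ℙ E) {X Y : Ω → ℝ} (hX : Measurable X)
    (hXb : ∃ C : ℝ, ∀ ω, |X ω| ≤ C) (hY : Measurable Y) (hYb : ∃ C : ℝ, ∀ ω, |Y ω| ≤ C)
    (lam : ℝ) :
    E (fun ω => lam * X ω + (1 - lam) * Y ω) = lam * E X + (1 - lam) * E Y := by
  rw [← hE.map_const_mul, ← hE.map_const_mul]
  exact hE.map_add _ _ (hX.const_mul lam) (exists_abs_le_const_mul lam hXb)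
    (hY.const_mul (1 - lam)) (exists_abs_le_const_mul (1 - lam) hYb)

lemma convexOnBounded_iff (hE : IsExpectationFunctional ℙ E)
    (hρ : ∀ X, Measurable X → (∃ C : ℝ, ∀ ω, |X ω| ≤ C) → ρ X = E X + τ X) :
    ConvexOnBounded ρ ↔ ConvexOnBounded τ := by
  refine forall₂_congr fun X Y => forall₄_congr fun hX hXb hY hYb =>
    forall₃_congr fun lam _ _ => ?_
  have hmix : Measurable fun ω => lam * X ω + (1 - lam) * Y ω :=
    (hX.const_mul lam).add (hY.const_mul (1 - lam))
  rw [hρ _ hmix (exists_abs_le_add (exists_abs_le_const_mul lam hXb)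
      (exists_abs_le_const_mul _ hYb)),
    hρ X hX hXb, hρ Y hY hYb, hE.map_convexCombination hX hXb hY hYb lam]
  constructor <;> intro h <;> linarith

lemma posHomogeneous_iff (hE : IsExpectationFunctional ℙ E)
    (hρ : ∀ X, Measurable X → (∃ C : ℝ, ∀ ω, |X ω| ≤ C) → ρ X = E X + τ X) :
    PosHomogeneous ρ ↔ PosHomogeneous τ := by
  refine forall₃_congr fun X hX hXb => forall₂_congr fun lam _ => ?_
  rw [hρ _ (hX.const_mul lam) (exists_abs_le_const_mul lam hXb), hρ X hX hXb,
    hE.map_const_mul]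
  constructor <;> intro h <;> linarith

lemma fatouProperty_iff (hE : IsExpectationFunctional ℙ E)
    (hρb : ∀ X C, Measurable X → (∀ ω, |X ω| ≤ C) → |ρ X| ≤ C)
    (hρ : ∀ X, Measurable X → (∃ C : ℝ, ∀ ω, |X ω| ≤ C) → ρ X = E X + τ X) :
    FatouProperty ℙ ρ ↔ FatouProperty ℙ τ := by
  refine forall₃_congr fun Xs X C => forall₅_congr fun hXs hXsb hX hXb hconv => ?_
  have hτ : (fun n => τ (Xs n)) = fun n => ρ (Xs n) - E (Xs n) :=
    funext fun n => by rw [hρ _ (hXs n) ⟨C, hXsb n⟩]; ring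
  have hρXs n : |ρ (Xs n)| ≤ C := hρb _ C (hXs n) (hXsb n)
  rw [hτ, liminf_sub_of_tendsto (isBoundedUnder_of ⟨C, fun n => (abs_le.1 (hρXs n)).2⟩)
    (isBoundedUnder_of ⟨-C, fun n => (abs_le.1 (hρXs n)).1⟩) (hE.tendsto Xs X C hXs hXsb hconv),
    hρ X hX ⟨C, hXb⟩]
  constructor <;> intro h <;> linarith

lemma gInvariant_sub (hE : IsExpectationFunctional ℙ E) (hm : m ≤ mΩ)
    (hconv : ConvexOnBounded ρ) (hhom : PosHomogeneous ρ)
    (hrest : ∀ Y, StronglyMeasurable[m] Y → (∃ C : ℝ, ∀ ω, |Y ω| ≤ C) → ρ Y = E Y) :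
    GInvariant m (fun X => ρ X - E X) := by
  intro X Y hX hXb hY hYb
  have hYmeas : Measurable Y := hY.measurable.mono hm le_rfl
  have hneg : ρ (-Y) = -ρ Y := by
    rw [hrest _ hY.neg (exists_abs_le_neg hYb), hrest Y hY hYb, hE.map_neg]
  show ρ (X + Y) - E (X + Y) = ρ X - E X
  rw [hconv.map_add_of_map_neg hhom hX hXb hYmeas hYb hneg, hE.map_add X Y hX hXb hYmeas hYb,
    hrest Y hY hYb]
  ring

lemma map_const_of_eq_add (hE : IsExpectationFunctional ℙ E) (hinv : GInvariant m τ)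
    (hhom : PosHomogeneous τ)
    (hρ : ∀ X, Measurable X → (∃ C : ℝ, ∀ ω, |X ω| ≤ C) → ρ X = E X + τ X) (c : ℝ) :
    ρ (fun _ => c) = c := by
  rw [hρ _ measurable_const (exists_abs_le_const c), hE.map_const,
    hinv.map_eq_zero hhom stronglyMeasurable_const (exists_abs_le_const c), add_zero]

lemma cashInvariant_of_eq_add (hE : IsExpectationFunctional ℙ E) (hinv : GInvariant m τ)
    (hρ : ∀ X, Measurable X → (∃ C : ℝ, ∀ ω, |X ω| ≤ C) → ρ X = E X + τ X) :
    CashInvariant ρ := by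
  intro X c hX hXb
  have hXc : X + (fun _ => c) = fun ω => X ω + c := rfl
  have hτ := hinv X (fun _ => c) hX hXb stronglyMeasurable_const (exists_abs_le_const c)
  have hEc := hE.map_add X (fun _ => c) hX hXb measurable_const (exists_abs_le_const c)
  rw [hXc] at hτ hEc
  rw [hρ _ (hX.add_const c) (exists_abs_le_add hXb (exists_abs_le_const c)), hρ X hX hXb, hτ,
    hEc, hE.map_const]
  ring

end IsExpectationFunctional

end RiskMeasure

open RiskMeasure

theorem stmt_10_general {Ω : Type*} (m : MeasurableSpace Ω) {mΩ : MeasurableSpace Ω} (hm : m ≤ mΩ)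
    (ℙ : Measure Ω) (Dμ : Ω → ℝ) (hDμint : Integrable Dμ ℙ) (hDμone : (∫ ω, Dμ ω ∂ℙ) = 1)
    (ρ : (Ω → ℝ) → ℝ) :
    -- (i) ρ is a Fatou coherent risk measure with ρ|_{L^∞(𝓖)} = 𝔼^μ
    (((∀ (X : Ω → ℝ) (c : ℝ), Measurable X → (∃ C : ℝ, ∀ ω, |X ω| ≤ C) →
        ρ (fun ω => X ω + c) = ρ X + c)
      ∧ (∀ X Y : Ω → ℝ, Measurable X → (∃ C : ℝ, ∀ ω, |X ω| ≤ C) → Measurable Y →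
          (∃ C : ℝ, ∀ ω, |Y ω| ≤ C) → (∀ᵐ ω ∂ℙ, X ω ≤ Y ω) → ρ X ≤ ρ Y)
      ∧ (∀ X Y : Ω → ℝ, Measurable X → (∃ C : ℝ, ∀ ω, |X ω| ≤ C) → Measurable Y →
          (∃ C : ℝ, ∀ ω, |Y ω| ≤ C) → ∀ lam : ℝ, 0 ≤ lam → lam ≤ 1 →
          ρ (fun ω => lam * X ω + (1 - lam) * Y ω) ≤ lam * ρ X + (1 - lam) * ρ Y)
      ∧ (∀ X : Ω → ℝ, Measurable X → (∃ C : ℝ, ∀ ω, |X ω| ≤ C) → ∀ lam : ℝ, 0 ≤ lam →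
          ρ (fun ω => lam * X ω) = lam * ρ X)
      ∧ (∀ (Xs : ℕ → Ω → ℝ) (X : Ω → ℝ) (C : ℝ), (∀ n, Measurable (Xs n)) →
          (∀ n ω, |Xs n ω| ≤ C) → Measurable X → (∀ ω, |X ω| ≤ C) →
          (∀ᵐ ω ∂ℙ, Filter.Tendsto (fun n => Xs n ω) Filter.atTop (nhds (X ω))) →
          ρ X ≤ Filter.liminf (fun n => ρ (Xs n)) Filter.atTop)
      ∧ (∀ X : Ω → ℝ, StronglyMeasurable[m] X → (∃ C : ℝ, ∀ ω, |X ω| ≤ C) →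
          ρ X = ∫ ω, Dμ ω * X ω ∂ℙ))
    ↔
    -- (ii) there is a Fatou μ-coherent adjustment τ with ρ = 𝔼^μ + τ
    (∃ τ : (Ω → ℝ) → ℝ,
      ((∀ X Y : Ω → ℝ, Measurable X → (∃ C : ℝ, ∀ ω, |X ω| ≤ C) →
          StronglyMeasurable[m] Y → (∃ C : ℝ, ∀ ω, |Y ω| ≤ C) → τ (X + Y) = τ X)
        ∧ (∀ X Y : Ω → ℝ, Measurable X → (∃ C : ℝ, ∀ ω, |X ω| ≤ C) → Measurable Y →
            (∃ C : ℝ, ∀ ω, |Y ω| ≤ C) → (∀ᵐ ω ∂ℙ, X ω ≤ Y ω) →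
            (∫ ω, Dμ ω * X ω ∂ℙ) + τ X ≤ (∫ ω, Dμ ω * Y ω ∂ℙ) + τ Y)
        ∧ (∀ X Y : Ω → ℝ, Measurable X → (∃ C : ℝ, ∀ ω, |X ω| ≤ C) → Measurable Y →
            (∃ C : ℝ, ∀ ω, |Y ω| ≤ C) → ∀ lam : ℝ, 0 ≤ lam → lam ≤ 1 →
            τ (fun ω => lam * X ω + (1 - lam) * Y ω) ≤ lam * τ X + (1 - lam) * τ Y)
        ∧ (∀ X : Ω → ℝ, Measurable X → (∃ C : ℝ, ∀ ω, |X ω| ≤ C) → ∀ lam : ℝ, 0 ≤ lam →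
            τ (fun ω => lam * X ω) = lam * τ X)
        ∧ (∀ (Xs : ℕ → Ω → ℝ) (X : Ω → ℝ) (C : ℝ), (∀ n, Measurable (Xs n)) →
            (∀ n ω, |Xs n ω| ≤ C) → Measurable X → (∀ ω, |X ω| ≤ C) →
            (∀ᵐ ω ∂ℙ, Filter.Tendsto (fun n => Xs n ω) Filter.atTop (nhds (X ω))) →
            τ X ≤ Filter.liminf (fun n => τ (Xs n)) Filter.atTop))
      ∧ ∀ X : Ω → ℝ, Measurable X → (∃ C : ℝ, ∀ ω, |X ω| ≤ C) →
          ρ X = (∫ ω, Dμ ω * X ω ∂ℙ) + τ X)) := by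
  have hE := isExpectationFunctional_integral_mul hDμint hDμone
  constructor
  · rintro ⟨(hcash : CashInvariant ρ), (hmono : MonotoneAE ℙ ρ), (hconv : ConvexOnBounded ρ),
      (hhom : PosHomogeneous ρ), (hfatou : FatouProperty ℙ ρ), hrest⟩
    have hρ : ∀ X, Measurable X → (∃ C : ℝ, ∀ ω, |X ω| ≤ C) →
        ρ X = (∫ ω, Dμ ω * X ω ∂ℙ) + (ρ X - ∫ ω, Dμ ω * X ω ∂ℙ) := fun X _ _ => by ring
    have hρb := hmono.abs_map_le (hcash.map_const hhom)
    exact ⟨fun X => ρ X - ∫ ω, Dμ ω * X ω ∂ℙ, ⟨hE.gInvariant_sub hm hconv hhom hrest,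
      (monotoneAE_congr hρ).1 hmono, (hE.convexOnBounded_iff hρ).1 hconv,
      (hE.posHomogeneous_iff hρ).1 hhom, (hE.fatouProperty_iff hρb hρ).1 hfatou⟩, hρ⟩
  · rintro ⟨τ, ⟨(hinv : GInvariant m τ), hmono, (hconv : ConvexOnBounded τ),
      (hhom : PosHomogeneous τ), (hfatou : FatouProperty ℙ τ)⟩, hρ⟩
    have hmonoρ : MonotoneAE ℙ ρ := (monotoneAE_congr hρ).2 hmono
    have hρb := hmonoρ.abs_map_le (hE.map_const_of_eq_add hinv hhom hρ)
    refine ⟨hE.cashInvariant_of_eq_add hinv hρ, hmonoρ, (hE.convexOnBounded_iff hρ).2 hconv,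
      (hE.posHomogeneous_iff hρ).2 hhom, (hE.fatouProperty_iff hρb hρ).2 hfatou,
      fun Y hY hYb => ?_⟩
    rw [hρ Y (hY.measurable.mono hm le_rfl) hYb, hinv.map_eq_zero hhom hY hYb, add_zero]

/-- ρ is a Fatou coherent risk measure whose restriction to L^∞(𝓖) is 𝔼^μ
if and only if ρ = 𝔼^μ + τ for some Fatou μ-coherent adjustment τ. -/
theorem stmt_10 {Ω : Type*} (m : MeasurableSpace Ω) {mΩ : MeasurableSpace Ω} (hm : m ≤ mΩ)
    (ℙ : Measure Ω) [IsProbabilityMeasure ℙ]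
    (Dμ : Ω → ℝ) (hDμmeas : StronglyMeasurable[m] Dμ) (hDμpos : ∀ᵐ ω ∂ℙ, 0 ≤ Dμ ω)
    (hDμint : Integrable Dμ ℙ) (hDμone : (∫ ω, Dμ ω ∂ℙ) = 1)
    (ρ : (Ω → ℝ) → ℝ) :
    -- (i) ρ is a Fatou coherent risk measure with ρ|_{L^∞(𝓖)} = 𝔼^μ
    (((∀ (X : Ω → ℝ) (c : ℝ), Measurable X → (∃ C : ℝ, ∀ ω, |X ω| ≤ C) →
        ρ (fun ω => X ω + c) = ρ X + c)
      ∧ (∀ X Y : Ω → ℝ, Measurable X → (∃ C : ℝ, ∀ ω, |X ω| ≤ C) → Measurable Y →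
          (∃ C : ℝ, ∀ ω, |Y ω| ≤ C) → (∀ᵐ ω ∂ℙ, X ω ≤ Y ω) → ρ X ≤ ρ Y)
      ∧ (∀ X Y : Ω → ℝ, Measurable X → (∃ C : ℝ, ∀ ω, |X ω| ≤ C) → Measurable Y →
          (∃ C : ℝ, ∀ ω, |Y ω| ≤ C) → ∀ lam : ℝ, 0 ≤ lam → lam ≤ 1 →
          ρ (fun ω => lam * X ω + (1 - lam) * Y ω) ≤ lam * ρ X + (1 - lam) * ρ Y)
      ∧ (∀ X : Ω → ℝ, Measurable X → (∃ C : ℝ, ∀ ω, |X ω| ≤ C) → ∀ lam : ℝ, 0 ≤ lam →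
          ρ (fun ω => lam * X ω) = lam * ρ X)
      ∧ (∀ (Xs : ℕ → Ω → ℝ) (X : Ω → ℝ) (C : ℝ), (∀ n, Measurable (Xs n)) →
          (∀ n ω, |Xs n ω| ≤ C) → Measurable X → (∀ ω, |X ω| ≤ C) →
          (∀ᵐ ω ∂ℙ, Filter.Tendsto (fun n => Xs n ω) Filter.atTop (nhds (X ω))) →
          ρ X ≤ Filter.liminf (fun n => ρ (Xs n)) Filter.atTop)
      ∧ (∀ X : Ω → ℝ, StronglyMeasurable[m] X → (∃ C : ℝ, ∀ ω, |X ω| ≤ C) →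
          ρ X = ∫ ω, Dμ ω * X ω ∂ℙ))
    ↔
    -- (ii) there is a Fatou μ-coherent adjustment τ with ρ = 𝔼^μ + τ
    (∃ τ : (Ω → ℝ) → ℝ,
      ((∀ X Y : Ω → ℝ, Measurable X → (∃ C : ℝ, ∀ ω, |X ω| ≤ C) →
          StronglyMeasurable[m] Y → (∃ C : ℝ, ∀ ω, |Y ω| ≤ C) → τ (X + Y) = τ X)
        ∧ (∀ X Y : Ω → ℝ, Measurable X → (∃ C : ℝ, ∀ ω, |X ω| ≤ C) → Measurable Y →
            (∃ C : ℝ, ∀ ω, |Y ω| ≤ C) → (∀ᵐ ω ∂ℙ, X ω ≤ Y ω) →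
            (∫ ω, Dμ ω * X ω ∂ℙ) + τ X ≤ (∫ ω, Dμ ω * Y ω ∂ℙ) + τ Y)
        ∧ (∀ X Y : Ω → ℝ, Measurable X → (∃ C : ℝ, ∀ ω, |X ω| ≤ C) → Measurable Y →
            (∃ C : ℝ, ∀ ω, |Y ω| ≤ C) → ∀ lam : ℝ, 0 ≤ lam → lam ≤ 1 →
            τ (fun ω => lam * X ω + (1 - lam) * Y ω) ≤ lam * τ X + (1 - lam) * τ Y)
        ∧ (∀ X : Ω → ℝ, Measurable X → (∃ C : ℝ, ∀ ω, |X ω| ≤ C) → ∀ lam : ℝ, 0 ≤ lam →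
            τ (fun ω => lam * X ω) = lam * τ X)
        ∧ (∀ (Xs : ℕ → Ω → ℝ) (X : Ω → ℝ) (C : ℝ), (∀ n, Measurable (Xs n)) →
            (∀ n ω, |Xs n ω| ≤ C) → Measurable X → (∀ ω, |X ω| ≤ C) →
            (∀ᵐ ω ∂ℙ, Filter.Tendsto (fun n => Xs n ω) Filter.atTop (nhds (X ω))) →
            τ X ≤ Filter.liminf (fun n => τ (Xs n)) Filter.atTop))
      ∧ ∀ X : Ω → ℝ, Measurable X → (∃ C : ℝ, ∀ ω, |X ω| ≤ C) →
          ρ X = (∫ ω, Dμ ω * X ω ∂ℙ) + τ X)) :=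
  stmt_10_general m hm ℙ Dμ hDμint hDμone ρ
end

section
/- Let ρ: L^∞ → ℝ be strongly 𝓖-law invariant, i.e., ρ(Z+X) = ρ(Z+Y) for all Z ∈ L^∞ with 𝔼[Z|𝓖] = 0 and all 𝓖-measurable X,Y ∈ L^∞ with the same distribution under ℙ. Then ρ(X) = ρ(X − 𝔼[X|𝓖] + Y) for all X ∈ L^∞ and 𝓖-measurable Y ∈ L^∞ with Y identically distributed as 𝔼[X|𝓖]; and conversely, this latter property implies strong 𝓖-law invariance. -/
/-!
Write `E = 𝔼[X|𝓖]`. Strong invariance applied to `Z = X - E`, which has zero conditional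
expectation, swaps `E` for any `𝓖`-measurable copy `Y` of its law. Conversely, for `Z` with zero
conditional expectation and `𝓖`-measurable `X`, the conditional expectation of `Z + X` is `X`
almost surely, so `Y + (𝔼[Z + X|𝓖] - X)` is a `𝓖`-measurable variable with the law of
`𝔼[Z + X|𝓖]`; substituting it for `Y` turns `Z + X - 𝔼[Z + X|𝓖] + Y` into `Z + Y` pointwise.
-/

open MeasureTheory

namespace CondLawInvariance

variable {Ω : Type*} {m mΩ : MeasurableSpace Ω} {μ : Measure Ω}

def AEBounded (μ : Measure Ω) (f : Ω → ℝ) : Prop := ∃ C : ℝ, ∀ᵐ ω ∂μ, |f ω| ≤ C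

lemma AEBounded.add {f g : Ω → ℝ} (hf : AEBounded μ f) (hg : AEBounded μ g) :
    AEBounded μ (f + g) := by
  obtain ⟨C, hC⟩ := hf
  obtain ⟨D, hD⟩ := hg
  refine ⟨C + D, ?_⟩
  filter_upwards [hC, hD] with ω hCω hDω
  exact (abs_add_le _ _).trans (add_le_add hCω hDω)

lemma AEBounded.neg {f : Ω → ℝ} (hf : AEBounded μ f) : AEBounded μ (-f) := by
  simpa [AEBounded] using hf

lemma AEBounded.sub {f g : Ω → ℝ} (hf : AEBounded μ f) (hg : AEBounded μ g) :
    AEBounded μ (f - g) := by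
  simpa only [sub_eq_add_neg] using hf.add hg.neg

lemma AEBounded.congr {f g : Ω → ℝ} (hf : AEBounded μ f) (hfg : f =ᵐ[μ] g) :
    AEBounded μ g := by
  obtain ⟨C, hC⟩ := hf
  refine ⟨C, ?_⟩
  filter_upwards [hC, hfg] with ω hCω hω
  rwa [← hω]

lemma AEBounded.integrable [IsFiniteMeasure μ] {f : Ω → ℝ} (hf : AEBounded μ f)
    (hf_meas : AEStronglyMeasurable f μ) : Integrable f μ := by
  obtain ⟨C, hC⟩ := hf
  exact .of_bound hf_meas C hC

lemma AEBounded.condExp {f : Ω → ℝ} (hf : AEBounded μ f) : AEBounded μ (μ[f|m]) := by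
  obtain ⟨C, hC⟩ := hf
  exact ⟨C, ae_bdd_abs_condExp_of_ae_bdd_abs hC⟩

section CondExp

variable {F : Type*} [NormedAddCommGroup F] [NormedSpace ℝ F] [CompleteSpace F]

lemma condExp_sub_condExp_ae_eq_zero (hm : m ≤ mΩ) [SigmaFinite (μ.trim hm)] {f : Ω → F}
    (hf : Integrable f μ) : μ[f - μ[f|m]|m] =ᵐ[μ] 0 := by
  have hcondExp_idem : μ[μ[f|m]|m] = μ[f|m] :=
    condExp_of_stronglyMeasurable hm stronglyMeasurable_condExp integrable_condExp
  filter_upwards [condExp_sub hf (integrable_condExp (m := m) (f := f)) m] with ω hω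
  simp [hω, hcondExp_idem]

lemma condExp_add_ae_eq_of_stronglyMeasurable (hm : m ≤ mΩ) [SigmaFinite (μ.trim hm)]
    {f g : Ω → F} (hf : Integrable f μ) (hf_zero : μ[f|m] =ᵐ[μ] 0)
    (hg : StronglyMeasurable[m] g) (hg_int : Integrable g μ) : μ[f + g|m] =ᵐ[μ] g := by
  filter_upwards [condExp_add hf hg_int m, hf_zero] with ω hω hfω
  simp [hω, hfω, condExp_of_stronglyMeasurable hm hg hg_int]

end CondExp

variable (m μ) in
def IsStronglyLawInvariant (ρ : (Ω → ℝ) → ℝ) : Prop :=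
  ∀ Z X Y : Ω → ℝ, Measurable Z → AEBounded μ Z → μ[Z|m] =ᵐ[μ] 0 →
    StronglyMeasurable[m] X → AEBounded μ X → StronglyMeasurable[m] Y → AEBounded μ Y →
    μ.map X = μ.map Y → ρ (Z + X) = ρ (Z + Y)

variable (m μ) in
def IsCondExpLawInvariant (ρ : (Ω → ℝ) → ℝ) : Prop :=
  ∀ X Y : Ω → ℝ, Measurable X → AEBounded μ X → StronglyMeasurable[m] Y → AEBounded μ Y →
    μ.map Y = μ.map (μ[X|m]) → ρ X = ρ (fun ω => X ω - μ[X|m] ω + Y ω)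

variable [IsProbabilityMeasure μ] {ρ : (Ω → ℝ) → ℝ}

lemma IsStronglyLawInvariant.isCondExpLawInvariant (hm : m ≤ mΩ)
    (hρ : IsStronglyLawInvariant m μ ρ) : IsCondExpLawInvariant m μ ρ := by
  intro X Y hX hX_bdd hY hY_bdd hlaw
  have hE : StronglyMeasurable[m] (μ[X|m]) := stronglyMeasurable_condExp
  have hZ_zero : μ[X - μ[X|m]|m] =ᵐ[μ] 0 :=
    condExp_sub_condExp_ae_eq_zero hm (hX_bdd.integrable hX.aestronglyMeasurable)
  have hswap := hρ (X - μ[X|m]) (μ[X|m]) Y (hX.sub (hE.measurable.mono hm le_rfl))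
    (hX_bdd.sub hX_bdd.condExp) hZ_zero hE hX_bdd.condExp hY hY_bdd hlaw.symm
  rwa [sub_add_cancel] at hswap

lemma IsCondExpLawInvariant.isStronglyLawInvariant (hm : m ≤ mΩ)
    (hρ : IsCondExpLawInvariant m μ ρ) : IsStronglyLawInvariant m μ ρ := by
  intro Z X Y hZ hZ_bdd hZ_zero hX hX_bdd hY hY_bdd hlaw
  have hX_meas : Measurable X := hX.measurable.mono hm le_rfl
  have hE : μ[Z + X|m] =ᵐ[μ] X :=
    condExp_add_ae_eq_of_stronglyMeasurable hm (hZ_bdd.integrable hZ.aestronglyMeasurable)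
      hZ_zero hX (hX_bdd.integrable hX_meas.aestronglyMeasurable)
  set Y' := Y + (μ[Z + X|m] - X)
  have hY' : Y' =ᵐ[μ] Y := by
    filter_upwards [hE] with ω hω
    simp [Y', hω]
  have hlaw' : μ.map Y' = μ.map (μ[Z + X|m]) := by
    rw [Measure.map_congr hY', ← hlaw, Measure.map_congr hE]
  have hswap := hρ (Z + X) Y' (hZ.add hX_meas) (hZ_bdd.add hX_bdd)
    (hY.add (stronglyMeasurable_condExp.sub hX)) (hY_bdd.congr hY'.symm) hlaw'
  rw [hswap]
  congr 1
  ext ω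
  simp only [Y', Pi.add_apply, Pi.sub_apply]
  ring

end CondLawInvariance

theorem stmt_12_general {Ω : Type*} (m : MeasurableSpace Ω) {mΩ : MeasurableSpace Ω} (hm : m ≤ mΩ)
    (ℙ : Measure Ω) [IsProbabilityMeasure ℙ] (ρ : (Ω → ℝ) → ℝ) :
    (∀ Z X Y : Ω → ℝ, Measurable Z → (∃ C : ℝ, ∀ᵐ ω ∂ℙ, |Z ω| ≤ C) →
        (ℙ[Z|m]) =ᵐ[ℙ] 0 →
        StronglyMeasurable[m] X → (∃ C : ℝ, ∀ᵐ ω ∂ℙ, |X ω| ≤ C) →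
        StronglyMeasurable[m] Y → (∃ C : ℝ, ∀ᵐ ω ∂ℙ, |Y ω| ≤ C) →
        Measure.map X ℙ = Measure.map Y ℙ → ρ (Z + X) = ρ (Z + Y))
    ↔ (∀ X Y : Ω → ℝ, Measurable X → (∃ C : ℝ, ∀ᵐ ω ∂ℙ, |X ω| ≤ C) →
        StronglyMeasurable[m] Y → (∃ C : ℝ, ∀ᵐ ω ∂ℙ, |Y ω| ≤ C) →
        Measure.map Y ℙ = Measure.map (ℙ[X|m]) ℙ →
        ρ X = ρ (fun ω => X ω - (ℙ[X|m]) ω + Y ω)) :=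
  ⟨CondLawInvariance.IsStronglyLawInvariant.isCondExpLawInvariant hm,
    CondLawInvariance.IsCondExpLawInvariant.isStronglyLawInvariant hm⟩

/-- ρ is strongly 𝓖-law invariant if and only if
ρ(X) = ρ(X − 𝔼[X|𝓖] + Y) for all X ∈ L^∞ and 𝓖-measurable Y ∈ L^∞ with Y identically
distributed as 𝔼[X|𝓖]. -/
theorem stmt_12 {Ω : Type*} (m : MeasurableSpace Ω) {mΩ : MeasurableSpace Ω} (hm : m ≤ mΩ)
    (ℙ : Measure Ω) [IsProbabilityMeasure ℙ] (ρ : (Ω → ℝ) → ℝ)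
    (hae : ∀ X Y : Ω → ℝ, X =ᵐ[ℙ] Y → ρ X = ρ Y) :
    (∀ Z X Y : Ω → ℝ, Measurable Z → (∃ C : ℝ, ∀ᵐ ω ∂ℙ, |Z ω| ≤ C) →
        (ℙ[Z|m]) =ᵐ[ℙ] 0 →
        StronglyMeasurable[m] X → (∃ C : ℝ, ∀ᵐ ω ∂ℙ, |X ω| ≤ C) →
        StronglyMeasurable[m] Y → (∃ C : ℝ, ∀ᵐ ω ∂ℙ, |Y ω| ≤ C) →
        Measure.map X ℙ = Measure.map Y ℙ → ρ (Z + X) = ρ (Z + Y))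
    ↔ (∀ X Y : Ω → ℝ, Measurable X → (∃ C : ℝ, ∀ᵐ ω ∂ℙ, |X ω| ≤ C) →
        StronglyMeasurable[m] Y → (∃ C : ℝ, ∀ᵐ ω ∂ℙ, |Y ω| ≤ C) →
        Measure.map Y ℙ = Measure.map (ℙ[X|m]) ℙ →
        ρ X = ρ (fun ω => X ω - (ℙ[X|m]) ω + Y ω)) :=
  stmt_12_general m hm ℙ ρ
end

section
/- Let 𝓠 be a 𝓖-convex set of probability measures ν ≪ ℙ with ν|_𝓖 = ℙ|_𝓖. Then for all X ∈ L^∞, sup_{μ ∈ 𝓠} 𝔼^μ[X] = 𝔼[esssup_{μ ∈ 𝓠} 𝔼^μ[X|𝓖]]. -/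
/-!
For `D ∈ 𝓠` write `F_D = ℙ[D X | 𝓖]`. On the `𝓖`-measurable set `{F_{D₂} ≤ F_{D₁}}` use the
density `D₁` and elsewhere `D₂`: by `𝓖`-convexity this mixture lies in `𝓠`, and its conditional
expectation is `max F_{D₁} F_{D₂}`. So the family `(F_D)` is upward directed, and it is bounded
because `X` is. A maximising sequence for `∫ F_D` can then be chosen a.e. increasing; its limit `Y`
has `∫ Y = sup_D 𝔼[D X]`, and `∫ max F_D Y ≤ ∫ Y` forces `F_D ≤ Y` a.e.
-/

open MeasureTheory Filter Topology

theorem Directed.exists_seq_rel_succ {α β : Type*} {r : β → β → Prop} {f : α → β}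
    (hf : Directed r f) (u : ℕ → α) :
    ∃ k : ℕ → α, (∀ n, r (f (u n)) (f (k n))) ∧ ∀ n, r (f (k n)) (f (k (n + 1))) := by
  choose z hz_left hz_right using hf
  let k : ℕ → α := fun n => Nat.rec (z (u 0) (u 0)) (fun n kn => z kn (u (n + 1))) n
  refine ⟨k, fun n => ?_, fun n => hz_left _ _⟩
  cases n <;> exact hz_right _ _

section EssentialSupremum

variable {Ω ι : Type*} {m mΩ : MeasurableSpace Ω} {μ : Measure Ω} {C : ℝ}

def IsEssLUB (μ : Measure Ω) (f : ι → Ω → ℝ) (Y : Ω → ℝ) : Prop :=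
  (∀ i, f i ≤ᵐ[μ] Y) ∧ ∀ Z, (∀ i, f i ≤ᵐ[μ] Z) → Y ≤ᵐ[μ] Z

theorem ae_le_of_integral_max_le {g Y : Ω → ℝ} (hg : Integrable g μ) (hY : Integrable Y μ)
    (h : ∫ ω, max (g ω) (Y ω) ∂μ ≤ ∫ ω, Y ω ∂μ) : g ≤ᵐ[μ] Y := by
  have hY_le : Y ≤ᵐ[μ] fun ω => max (g ω) (Y ω) := ae_of_all _ fun ω => le_max_right _ _
  have heq : ∫ ω, Y ω ∂μ = ∫ ω, max (g ω) (Y ω) ∂μ :=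
    le_antisymm (integral_mono_ae hY (hg.sup hY) hY_le) h
  filter_upwards [(integral_eq_iff_of_ae_le hY (hg.sup hY) hY_le).1 heq] with ω hω
  exact hω ▸ le_max_left _ _

theorem Directed.ae_le_of_tendsto [IsFiniteMeasure μ] {f : ι → Ω → ℝ}
    (hdir : Directed (· ≤ᵐ[μ] ·) f) (hf : ∀ i, Integrable (f i) μ)
    (hC : ∀ i, ∀ᵐ ω ∂μ, ‖f i ω‖ ≤ C)
    {k : ℕ → ι} {Y : Ω → ℝ} (hY : Integrable Y μ)
    (hlim : ∀ᵐ ω ∂μ, Tendsto (fun n => f (k n) ω) atTop (𝓝 (Y ω)))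
    (hub : ∀ i, ∫ ω, f i ω ∂μ ≤ ∫ ω, Y ω ∂μ) (i : ι) : f i ≤ᵐ[μ] Y := by
  choose z hz_i hz_k using fun n => hdir i (k n)
  have h_max_le : ∀ n, ∫ ω, max (f i ω) (f (k n) ω) ∂μ ≤ ∫ ω, Y ω ∂μ := fun n =>
    (integral_mono_ae ((hf i).sup (hf (k n))) (hf (z n))
      ((hz_i n).sup_le (hz_k n))).trans (hub (z n))
  have h_max_lim : Tendsto (fun n => ∫ ω, max (f i ω) (f (k n) ω) ∂μ) atTop
      (𝓝 (∫ ω, max (f i ω) (Y ω) ∂μ)) := by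
    refine tendsto_integral_of_dominated_convergence (fun _ => C)
      (fun n => ((hf i).sup (hf (k n))).aestronglyMeasurable) (integrable_const C)
      (fun n => ?_) ?_
    · filter_upwards [hC i, hC (k n)] with ω hi hk
      simp only [Real.norm_eq_abs] at hi hk ⊢
      exact abs_max_le_max_abs_abs.trans (max_le hi hk)
    · filter_upwards [hlim] with ω hω using tendsto_const_nhds.max hω
  exact ae_le_of_integral_max_le (hf i) hY (le_of_tendsto' h_max_lim h_max_le)

theorem Directed.exists_isEssLUB [IsFiniteMeasure μ] (hm : m ≤ mΩ) [Nonempty ι]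
    {f : ι → Ω → ℝ} (hdir : Directed (· ≤ᵐ[μ] ·) f) (hf : ∀ i, StronglyMeasurable[m] (f i))
    (hC : ∀ i, ∀ᵐ ω ∂μ, ‖f i ω‖ ≤ C) :
    ∃ Y, StronglyMeasurable[m] Y ∧ Integrable Y μ ∧ IsEssLUB μ f Y ∧
      IsLUB (Set.range fun i => ∫ ω, f i ω ∂μ) (∫ ω, Y ω ∂μ) := by
  set S := Set.range fun i => ∫ ω, f i ω ∂μ
  have hf_int : ∀ i, Integrable (f i) μ := fun i =>
    .of_bound ((hf i).mono hm).aestronglyMeasurable C (hC i)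
  have hS_bdd : BddAbove S := ⟨C * μ.real Set.univ, by
    rintro _ ⟨i, rfl⟩
    exact (le_abs_self _).trans (norm_integral_le_of_norm_le_const (hC i))⟩
  obtain ⟨a, -, ha, ha_mem⟩ := exists_seq_tendsto_sSup (Set.range_nonempty _) hS_bdd
  choose u hu using ha_mem
  obtain ⟨k, hku, hk_succ⟩ := hdir.exists_seq_rel_succ u
  have hC_k : ∀ᵐ ω ∂μ, ∀ n, ‖f (k n) ω‖ ≤ C := ae_all_iff.2 fun n => hC (k n)
  set Y := fun ω => ⨆ n, f (k n) ω
  have hlim : ∀ᵐ ω ∂μ, Tendsto (fun n => f (k n) ω) atTop (𝓝 (Y ω)) := by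
    filter_upwards [ae_all_iff.2 hk_succ, hC_k] with ω h_succ hω
    exact tendsto_atTop_ciSup (monotone_nat_of_le_succ h_succ)
      ⟨C, by rintro _ ⟨n, rfl⟩; exact (Real.le_norm_self _).trans (hω n)⟩
  have hY_meas : StronglyMeasurable[m] Y :=
    (Measurable.iSup fun n => (hf (k n)).measurable).stronglyMeasurable
  have hY_int : Integrable Y μ := by
    refine .of_bound (hY_meas.mono hm).aestronglyMeasurable C ?_
    filter_upwards [hlim, hC_k] with ω hω hCω using le_of_tendsto' hω.norm hCω
  have hY_eq : ∫ ω, Y ω ∂μ = sSup S := by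
    refine tendsto_nhds_unique (tendsto_integral_of_dominated_convergence (fun _ => C)
      (fun n => (hf_int (k n)).aestronglyMeasurable) (integrable_const C)
      (fun n => hC (k n)) hlim) ?_
    refine tendsto_of_tendsto_of_tendsto_of_le_of_le ha tendsto_const_nhds (fun n => ?_)
      fun n => le_csSup hS_bdd ⟨k n, rfl⟩
    exact (hu n).symm.trans_le (integral_mono_ae (hf_int _) (hf_int _) (hku n))
  have hub : ∀ i, f i ≤ᵐ[μ] Y :=
    hdir.ae_le_of_tendsto hf_int hC hY_int hlim fun i => hY_eq ▸ le_csSup hS_bdd ⟨i, rfl⟩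
  refine ⟨Y, hY_meas, hY_int, ⟨hub, fun Z hZ => ?_⟩,
    hY_eq ▸ isLUB_csSup (Set.range_nonempty _) hS_bdd⟩
  filter_upwards [ae_all_iff.2 fun n => hZ (k n)] with ω hω using ciSup_le hω

end EssentialSupremum

section Densities

variable {Ω : Type*} {m mΩ : MeasurableSpace Ω} {μ : Measure Ω} {D X : Ω → ℝ} {C : ℝ}

theorem ae_norm_condExp_mul_le (hD0 : ∀ᵐ ω ∂μ, 0 ≤ D ω) (hD : Integrable D μ)
    (hD1 : μ[D|m] =ᵐ[μ] fun _ => 1) (hX : AEStronglyMeasurable X μ)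
    (hC : ∀ᵐ ω ∂μ, ‖X ω‖ ≤ C) :
    ∀ᵐ ω ∂μ, ‖μ[fun ω => D ω * X ω|m] ω‖ ≤ C := by
  have hDX : Integrable (fun ω => D ω * X ω) μ := hD.mul_bdd hX hC
  have hCD : μ[C • D|m] =ᵐ[μ] fun _ => C := by
    filter_upwards [condExp_smul C D m, hD1] with ω h h1
    simp [h, h1]
  have h_bound : ∀ᵐ ω ∂μ, |D ω * X ω| ≤ (C • D) ω := by
    filter_upwards [hD0, hC] with ω h0 hω
    rw [Real.norm_eq_abs] at hω
    rw [abs_mul, abs_of_nonneg h0, Pi.smul_apply, smul_eq_mul, mul_comm]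
    exact mul_le_mul_of_nonneg_right hω h0
  have h_upper := condExp_mono (m := m) hDX (hD.smul C)
    (h_bound.mono fun ω h => (le_abs_self _).trans h)
  have h_lower := condExp_mono (m := m) hDX.neg (hD.smul C)
    (h_bound.mono fun ω h => (neg_le_abs _).trans h)
  filter_upwards [h_upper, h_lower, hCD, condExp_neg (fun ω => D ω * X ω) m]
    with ω h_up h_lo hCω h_neg
  rw [hCω] at h_up h_lo
  rw [h_neg, Pi.neg_apply] at h_lo
  exact (Real.norm_eq_abs _).trans_le (abs_le.2 ⟨by linarith, h_up⟩)

theorem condExp_piecewise (hm : m ≤ mΩ) {f g : Ω → ℝ} {S : Set Ω} [DecidablePred (· ∈ S)]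
    (hf : Integrable f μ) (hg : Integrable g μ) (hS : MeasurableSet[m] S) :
    μ[S.piecewise f g|m] =ᵐ[μ] S.piecewise (μ[f|m]) (μ[g|m]) := by
  rw [← Set.indicator_add_compl_eq_piecewise, ← Set.indicator_add_compl_eq_piecewise]
  filter_upwards [condExp_add (hf.indicator (hm S hS)) (hg.indicator (hm S hS).compl) m,
    condExp_indicator hf hS, condExp_indicator hg hS.compl] with ω h h₁ h₂
  rw [h, Pi.add_apply, Pi.add_apply, h₁, h₂]

theorem directed_condExp_mul_of_convex (hm : m ≤ mΩ) {𝓠 : Set (Ω → ℝ)}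
    (hDX : ∀ D ∈ 𝓠, Integrable (fun ω => D ω * X ω) μ)
    (hconv : ∀ D₁ ∈ 𝓠, ∀ D₂ ∈ 𝓠, ∀ lam : Ω → ℝ, StronglyMeasurable[m] lam →
      (∀ ω, 0 ≤ lam ω ∧ lam ω ≤ 1) → (fun ω => lam ω * D₁ ω + (1 - lam ω) * D₂ ω) ∈ 𝓠) :
    Directed (· ≤ᵐ[μ] ·) fun D : 𝓠 => μ[fun ω => D.1 ω * X ω|m] := by
  classical
  rintro ⟨D₁, h₁⟩ ⟨D₂, h₂⟩
  set F₁ := μ[fun ω => D₁ ω * X ω|m]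
  set F₂ := μ[fun ω => D₂ ω * X ω|m]
  set S := {ω | F₂ ω ≤ F₁ ω}
  have hS : MeasurableSet[m] S :=
    stronglyMeasurable_condExp.measurableSet_le stronglyMeasurable_condExp
  set lam : Ω → ℝ := S.indicator 1
  have h_mix : (fun ω => (lam ω * D₁ ω + (1 - lam ω) * D₂ ω) * X ω) =
      S.piecewise (fun ω => D₁ ω * X ω) (fun ω => D₂ ω * X ω) := by
    funext ω
    by_cases hω : ω ∈ S <;> simp [lam, hω]
  have h_lam : ∀ ω, 0 ≤ lam ω ∧ lam ω ≤ 1 := fun ω => by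
    by_cases hω : ω ∈ S <;> simp [lam, hω]
  refine ⟨⟨_, hconv D₁ h₁ D₂ h₂ lam (stronglyMeasurable_one.indicator hS) h_lam⟩, ?_⟩
  have h_eq := condExp_piecewise hm (hDX D₁ h₁) (hDX D₂ h₂) hS
  have h_max : ∀ ω, S.piecewise F₁ F₂ ω = max (F₁ ω) (F₂ ω) := fun ω => by
    by_cases hω : ω ∈ S
    · simp [hω, max_eq_left (show F₂ ω ≤ F₁ ω from hω)]
    · simp [hω, max_eq_right (not_le.1 (show ¬F₂ ω ≤ F₁ ω from hω)).le]
  simp only [h_mix]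
  constructor <;> filter_upwards [h_eq] with ω hω <;> rw [hω, h_max]
  exacts [le_max_left _ _, le_max_right _ _]

end Densities

/-- for a 𝓖-convex set 𝓠 of probability measures ν ≪ ℙ with ν|_𝓖 = ℙ|_𝓖
(identified with their densities), sup_{μ∈𝓠} 𝔼^μ[X] = 𝔼[esssup_{μ∈𝓠} 𝔼^μ[X|𝓖]] for all
X ∈ L^∞. -/
theorem stmt_15 {Ω : Type*} (m : MeasurableSpace Ω) {mΩ : MeasurableSpace Ω} (hm : m ≤ mΩ)
    (ℙ : Measure Ω) [IsProbabilityMeasure ℙ]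
    (𝓠 : Set (Ω → ℝ)) (hne : 𝓠.Nonempty)
    (h𝓠 : ∀ D ∈ 𝓠, Measurable D ∧ (∀ᵐ ω ∂ℙ, 0 ≤ D ω) ∧ Integrable D ℙ ∧
      (ℙ[D|m]) =ᵐ[ℙ] (fun _ => 1))
    (hGconv : ∀ D₁ ∈ 𝓠, ∀ D₂ ∈ 𝓠, ∀ lam : Ω → ℝ, StronglyMeasurable[m] lam →
      (∀ ω, 0 ≤ lam ω ∧ lam ω ≤ 1) →
      (fun ω => lam ω * D₁ ω + (1 - lam ω) * D₂ ω) ∈ 𝓠) :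
    ∀ X : Ω → ℝ, Measurable X → (∃ C : ℝ, ∀ ω, |X ω| ≤ C) →
      ∃ Y : Ω → ℝ, StronglyMeasurable[m] Y ∧ Integrable Y ℙ ∧
        (∀ D ∈ 𝓠, (ℙ[(fun ω => D ω * X ω)|m]) ≤ᵐ[ℙ] Y) ∧
        (∀ Z : Ω → ℝ, Measurable Z →
          (∀ D ∈ 𝓠, (ℙ[(fun ω => D ω * X ω)|m]) ≤ᵐ[ℙ] Z) → Y ≤ᵐ[ℙ] Z) ∧
        sSup ((fun D => ∫ ω, D ω * X ω ∂ℙ) '' 𝓠) = ∫ ω, Y ω ∂ℙ := by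
  rintro X hX ⟨C, hC⟩
  have : Nonempty 𝓠 := hne.to_subtype
  have hX_bdd : ∀ᵐ ω ∂ℙ, ‖X ω‖ ≤ C := ae_of_all _ fun ω => (Real.norm_eq_abs _).trans_le (hC ω)
  have hDX : ∀ D ∈ 𝓠, Integrable (fun ω => D ω * X ω) ℙ := fun D hD =>
    (h𝓠 D hD).2.2.1.mul_bdd hX.aestronglyMeasurable hX_bdd
  have h_bound : ∀ D : 𝓠, ∀ᵐ ω ∂ℙ, ‖ℙ[fun ω => D.1 ω * X ω|m] ω‖ ≤ C := fun ⟨D, hD⟩ =>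
    ae_norm_condExp_mul_le (h𝓠 D hD).2.1 (h𝓠 D hD).2.2.1 (h𝓠 D hD).2.2.2
      hX.aestronglyMeasurable hX_bdd
  obtain ⟨Y, hY_meas, hY_int, ⟨hub, hmin⟩, hlub⟩ :=
    (directed_condExp_mul_of_convex hm hDX hGconv).exists_isEssLUB hm
      (fun _ => stronglyMeasurable_condExp) h_bound
  refine ⟨Y, hY_meas, hY_int, fun D hD => hub ⟨D, hD⟩,
    fun Z _ hZ => hmin Z fun D => hZ D.1 D.2, ?_⟩
  simp only [integral_condExp hm] at hlub
  rw [Set.image_eq_range]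
  exact hlub.csSup_eq (Set.range_nonempty _)
end
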